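/- arXiv:1406.1330 — 12 statements merged into one kernel-verified Lean document; each statement's English description precedes it below -/
import Mathlib

section
/- Let θ_0, …, θ_{n−1} and φ be elements of R. For an invertible element a of R define the Darboux map G_a(ψ) = D(ψ) − D(a)a⁻¹ψ. Define recursively θ[0] = θ_0 and, for 1 ≤ k ≤ n−1, θ[k] = G_{θ[k−1]} ∘ ⋯ ∘ G_{θ[0]}(θ_k), and set φ[n] = G_{θ[n−1]} ∘ ⋯ ∘ G_{θ[0]}(φ). Assume every θ[k] (0 ≤ k ≤ n−1) is invertible in R and that the n×n matrix W over R with entries W_{i,j} = D^i(θ_j) (0 ≤ i, j ≤ n−1) is invertible. Then φ[n] = D^n(φ) − Σ_{j=0}^{n−1} Σ_{i=0}^{n−1} D^n(θ_j)·(W⁻¹)_{j,i}·D^i(φ); that is, φ[n] equals the quasideterminant of the (n+1)×(n+1) matrix (D^i(θ_0), …, D^i(θ_{n−1}), D^i(φ))_{i=0,…,n} expanded about its bottom-right entry D^n(φ). -/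
/-!
By the twisted Leibniz rule `D ∘ (∑ aᵢ Dⁱ) = ∑ (D aᵢ) Dⁱ + σ(aᵢ) Dⁱ⁺¹`, so a Darboux step
`ψ ↦ D ψ - c ψ` turns a monic operator of order `k` with left coefficients into one of order
`k + 1`. Hence `iter n = Dⁿ + ∑_{i<n} aᵢ Dⁱ` with coefficients `aᵢ` independent of `ψ`. Step `k`
kills `θ[k]`, so `iter n θⱼ = 0` for every `j < n`: the row vector `a` satisfies
`a W = -(Dⁿ θⱼ)ⱼ`, and multiplying by `W⁻¹` on the right determines `a`.
-/

namespace TwistedDerivation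

variable {R : Type*} [Ring R]

/-- The left `R`-span of `D^[0], …, D^[k-1]` in `R → R`, where `(r • f) ψ = r * f ψ`. -/
def lowerOrderOps (D : R → R) (k : ℕ) : Submodule R (R → R) :=
  Submodule.span R (Set.range fun i : Fin k => D^[i])

theorem iterate_mem_lowerOrderOps (D : R → R) {i k : ℕ} (h : i < k) :
    D^[i] ∈ lowerOrderOps D k :=
  Submodule.subset_span ⟨⟨i, h⟩, rfl⟩

theorem lowerOrderOps_mono (D : R → R) {k l : ℕ} (h : k ≤ l) :
    lowerOrderOps D k ≤ lowerOrderOps D l :=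
  Submodule.span_le.2 <| Set.range_subset_iff.2 fun i =>
    iterate_mem_lowerOrderOps D (i.2.trans_le h)

theorem exists_coeff_of_sub_iterate_mem {D : R → R} {k : ℕ} {L : R → R}
    (hL : L - D^[k] ∈ lowerOrderOps D k) :
    ∃ a : Fin k → R, ∀ ψ, L ψ = D^[k] ψ + ∑ i, a i * D^[i] ψ := by
  obtain ⟨a, ha⟩ := (Submodule.mem_span_range_iff_exists_fun R).1 hL
  refine ⟨a, fun ψ => ?_⟩
  rw [← sub_eq_iff_eq_add', ← Pi.sub_apply, ← ha]
  simp

theorem apply_eq_sub_sum_mul_inv_mul {D : R → R} {n : ℕ} {L : R → R} {a : Fin n → R}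
    (hL : ∀ ψ, L ψ = D^[n] ψ + ∑ i, a i * D^[i] ψ) {θ : Fin n → R} (hθ : ∀ j, L (θ j) = 0)
    {W Winv : Matrix (Fin n) (Fin n) R} (hW : ∀ i j : Fin n, W i j = D^[i] (θ j))
    (hWl : W * Winv = 1) (ψ : R) :
    L ψ = D^[n] ψ - ∑ j, ∑ i, D^[n] (θ j) * Winv j i * D^[i] ψ := by
  have hrow : Matrix.vecMul a W = -fun j => D^[n] (θ j) := by
    funext j
    have := hL (θ j)
    rw [hθ, eq_comm, add_eq_zero_iff_neg_eq'] at this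
    simp [Matrix.vecMul, dotProduct, hW, ← this]
  have ha : a = Matrix.vecMul (-fun j => D^[n] (θ j)) Winv := by
    rw [← hrow, Matrix.vecMul_vecMul, hWl, Matrix.vecMul_one]
  rw [hL, ha, Finset.sum_comm]
  simp [Matrix.vecMul, dotProduct, Finset.sum_mul, sub_eq_add_neg]

variable {σ : R →+* R} {D : R → R}

theorem comp_mem_lowerOrderOps_succ (hDadd : ∀ a b : R, D (a + b) = D a + D b)
    (hD : ∀ a b : R, D (a * b) = D a * b + σ a * D b) {k : ℕ} {f : R → R}
    (hf : f ∈ lowerOrderOps D k) : D ∘ f ∈ lowerOrderOps D (k + 1) := by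
  induction hf using Submodule.span_induction with
  | mem _ h =>
    obtain ⟨i, rfl⟩ := h
    rw [← Function.iterate_succ']
    exact iterate_mem_lowerOrderOps D (Nat.succ_lt_succ i.2)
  | zero =>
    have : D ∘ (0 : R → R) = 0 := funext fun _ => (AddMonoidHom.mk' D hDadd).map_zero
    rw [this]
    exact zero_mem _
  | add f g _ _ hf hg =>
    have : D ∘ (f + g) = D ∘ f + D ∘ g := funext fun _ => hDadd _ _
    exact this ▸ add_mem hf hg
  | smul r f hf hDf =>
    have : D ∘ (r • f) = D r • f + σ r • (D ∘ f) := funext fun _ => hD _ _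
    rw [this]
    exact add_mem (Submodule.smul_mem _ _ (lowerOrderOps_mono D k.le_succ hf))
      (Submodule.smul_mem _ _ hDf)

theorem darboux_sub_iterate_mem (hDadd : ∀ a b : R, D (a + b) = D a + D b)
    (hD : ∀ a b : R, D (a * b) = D a * b + σ a * D b) {k : ℕ} {L : R → R} (c : R)
    (hL : L - D^[k] ∈ lowerOrderOps D k) :
    (fun ψ => D (L ψ) - c * L ψ) - D^[k + 1] ∈ lowerOrderOps D (k + 1) := by
  have split : (fun ψ => D (L ψ) - c * L ψ) - D^[k + 1]
      = D ∘ (L - D^[k]) - c • (L - D^[k]) - c • D^[k] := by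
    funext ψ
    have : D (L ψ) = D ((L - D^[k]) ψ) + D^[k + 1] ψ := by
      rw [Function.iterate_succ_apply', ← hDadd, Pi.sub_apply, sub_add_cancel]
    simp only [Pi.sub_apply, Pi.smul_apply, Function.comp_apply, smul_eq_mul, this]
    noncomm_ring
  rw [split]
  refine sub_mem (sub_mem (comp_mem_lowerOrderOps_succ hDadd hD hL) ?_) ?_
  · exact Submodule.smul_mem _ _ (lowerOrderOps_mono D k.le_succ hL)
  · exact Submodule.smul_mem _ _ (iterate_mem_lowerOrderOps D k.lt_succ_self)

theorem darboux_chain_sub_iterate_mem (hDadd : ∀ a b : R, D (a + b) = D a + D b)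
    (hD : ∀ a b : R, D (a * b) = D a * b + σ a * D b) {n : ℕ} {L : ℕ → R → R}
    (hL0 : ∀ ψ, L 0 ψ = ψ) (hLsucc : ∀ k < n, ∃ c : R, ∀ ψ, L (k + 1) ψ = D (L k ψ) - c * L k ψ) :
    ∀ k ≤ n, L k - D^[k] ∈ lowerOrderOps D k
  | 0, _ => by
    rw [show L 0 = id from funext hL0, Function.iterate_zero, sub_self]
    exact zero_mem _
  | k + 1, hk => by
    obtain ⟨c, hc⟩ := hLsucc k hk
    rw [show L (k + 1) = _ from funext hc]
    exact darboux_sub_iterate_mem hDadd hD c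
      (darboux_chain_sub_iterate_mem hDadd hD hL0 hLsucc k (Nat.le_of_succ_le hk))

end TwistedDerivation

open TwistedDerivation in
theorem stmt_0_general {R : Type*} [Ring R] (σ : R →+* R) (D : R → R)
    (hDadd : ∀ a b : R, D (a + b) = D a + D b)
    (hD : ∀ a b : R, D (a * b) = D a * b + σ a * D b)
    (n : ℕ) (θ : Fin n → R) (φ : R)
    (Θ : Fin n → R) (iter : ℕ → R → R)
    (hiter0 : ∀ ψ : R, iter 0 ψ = ψ)
    (hiterS : ∀ (k : ℕ) (hk : k < n) (ψ : R),
      iter (k + 1) ψ =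
        D (iter k ψ) - D (Θ ⟨k, hk⟩) * Ring.inverse (Θ ⟨k, hk⟩) * iter k ψ)
    (hΘ : ∀ k : Fin n, Θ k = iter (k : ℕ) (θ k))
    (hΘunit : ∀ k : Fin n, IsUnit (Θ k))
    (W : Matrix (Fin n) (Fin n) R)
    (hW : ∀ i j : Fin n, W i j = D^[(i : ℕ)] (θ j))
    (Winv : Matrix (Fin n) (Fin n) R)
    (hWl : W * Winv = 1) :
    iter n φ =
      D^[n] φ - ∑ j : Fin n, ∑ i : Fin n,
        D^[n] (θ j) * Winv j i * D^[(i : ℕ)] φ := by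
  obtain ⟨a, ha⟩ := exists_coeff_of_sub_iterate_mem <|
    darboux_chain_sub_iterate_mem hDadd hD hiter0 (fun k hk => ⟨_, hiterS k hk⟩) n le_rfl
  have hkill : ∀ j : Fin n, iter n (θ j) = 0 := by
    intro j
    have hself : iter (j + 1) (θ j) = 0 := by
      rw [hiterS j j.2, ← hΘ, mul_assoc, Ring.inverse_mul_cancel _ (hΘunit j), mul_one, sub_self]
    suffices ∀ m, (j : ℕ) + 1 ≤ m → m ≤ n → iter m (θ j) = 0 from this n j.2 le_rfl
    intro m hjm
    induction m, hjm using Nat.le_induction with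
    | base => exact fun _ => hself
    | succ m _ ih =>
      intro hm
      rw [hiterS m hm, ih (Nat.le_of_succ_le hm), mul_zero, sub_zero]
      exact (AddMonoidHom.mk' D hDadd).map_zero
  exact apply_eq_sub_sum_mul_inv_mul ha hkill hW hWl φ

/-- Closed-form quasideterminant expression for the `n`-fold Darboux transform
built from a twisted derivation `D` with homomorphism `σ`. -/
theorem stmt_0 {R : Type*} [Ring R] (σ : R →+* R) (D : R → R)
    (hDadd : ∀ a b : R, D (a + b) = D a + D b)
    (hD : ∀ a b : R, D (a * b) = D a * b + σ a * D b)
    (n : ℕ) (θ : Fin n → R) (φ : R)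
    (Θ : Fin n → R) (iter : ℕ → R → R)
    (hiter0 : ∀ ψ : R, iter 0 ψ = ψ)
    (hiterS : ∀ (k : ℕ) (hk : k < n) (ψ : R),
      iter (k + 1) ψ =
        D (iter k ψ) - D (Θ ⟨k, hk⟩) * Ring.inverse (Θ ⟨k, hk⟩) * iter k ψ)
    (hΘ : ∀ k : Fin n, Θ k = iter (k : ℕ) (θ k))
    (hΘunit : ∀ k : Fin n, IsUnit (Θ k))
    (W : Matrix (Fin n) (Fin n) R)
    (hW : ∀ i j : Fin n, W i j = D^[(i : ℕ)] (θ j))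
    (Winv : Matrix (Fin n) (Fin n) R)
    (hWl : W * Winv = 1) (hWr : Winv * W = 1) :
    iter n φ =
      D^[n] φ - ∑ j : Fin n, ∑ i : Fin n,
        D^[n] (θ j) * Winv j i * D^[(i : ℕ)] φ :=
  stmt_0_general σ D hDadd hD n θ φ Θ iter hiter0 hiterS hΘ hΘunit W hW Winv hWl
end

section
/- For all n ∈ ℤ and all x ≠ 0, y ≠ 0: (δ_{q^β,y}τ'_n)(x,y)·τ_n(x,y) − (δ_{q^β,y}τ_n)(x,y)·τ'_n(x,y) = τ'_{n−1}(x,y)·τ_{n+1}(x, q^β y). -/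
/-!
Put `v m = (f^{(k)}_m(x, y))_k` and `w m = (f^{(k)}_m(x, q^β y))_k`. The `y`-dispersion relation
says `w m = v m - c • v (m - 1)` with `c = (1 - q) y`, and after clearing `c` the claim becomes a
quadratic identity between Casoratians of `v` and `w`; the `N × N` ones are the
`(N + 1) × (N + 1)` ones bordered by the last unit vector `e`. That identity is a three-term
Plücker relation: apply `φ = det (v n, …, v (n + N - 1), ·)` to the linear dependence of the
`N + 2` vectors `w n, …, w (n + N), e` in an `(N + 1)`-dimensional space. Since `φ` kills
`v n, …, v (n + N - 1)`, only the terms of `w n` and `w (n + N)` survive.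
-/

open Matrix

/-- The q-difference operator in `x`. -/
noncomputable def qdiffX (q α : ℝ) (f : ℝ → ℝ → ℂ) (x y : ℝ) : ℂ :=
  (f x y - f (q ^ α * x) y) / (((1 - q) * x : ℝ) : ℂ)

/-- The q-difference operator in `y`. -/
noncomputable def qdiffY (q β : ℝ) (f : ℝ → ℝ → ℂ) (x y : ℝ) : ℂ :=
  (f x y - f x (q ^ β * y)) / (((1 - q) * y : ℝ) : ℂ)

theorem qdiffY_mul_eq_sub {q y : ℝ} (β : ℝ) (g : ℝ → ℝ → ℂ) (x : ℝ)
    (hc : (((1 - q) * y : ℝ) : ℂ) ≠ 0) :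
    qdiffY q β g x y * (((1 - q) * y : ℝ) : ℂ) = g x y - g x (q ^ β * y) :=
  div_mul_cancel₀ _ hc

theorem Fin.snoc_comp_castSucc_succAbove {α : Type*} {n : ℕ} (u : Fin (n + 1) → α) (x : α)
    (j : Fin (n + 1)) :
    (Fin.snoc u x : Fin (n + 2) → α) ∘ j.castSucc.succAbove = Fin.snoc (u ∘ j.succAbove) x := by
  funext i
  refine Fin.lastCases ?_ (fun i => ?_) i
  · simp [Fin.succAbove_ne_last_last (Fin.castSucc_lt_last j).ne]
  · simp

namespace Matrix

variable {R : Type*} [CommRing R]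

theorem sum_det_succAbove_smul_eq_zero {d : ℕ} (z : Fin (d + 1) → Fin d → R) :
    ∑ k : Fin (d + 1), ((-1) ^ (k : ℕ) * (of fun i => z (k.succAbove i)).det) • z k = 0 := by
  funext l
  -- expand along column `0` a matrix whose column `0` repeats column `l + 1`
  have hzero : (of fun k => (Fin.cons (z k l) (z k) : Fin (d + 1) → R)).det = 0 :=
    det_zero_of_column_eq (Fin.succ_ne_zero l).symm fun k => by simp
  rw [det_succ_column_zero] at hzero
  simpa only [Finset.sum_apply, Pi.smul_apply, smul_eq_mul, Pi.zero_apply, of_apply,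
    Fin.cons_zero, submatrix, Fin.cons_succ, mul_right_comm] using hzero

theorem det_of_cons {N : ℕ} (x : Fin (N + 1) → R) (u : Fin N → Fin (N + 1) → R) :
    (of (Fin.cons x u : Fin (N + 1) → Fin (N + 1) → R)).det
      = (-1) ^ N * (of (Fin.snoc u x : Fin (N + 1) → Fin (N + 1) → R)).det := by
  rw [Fin.snoc_eq_cons_rotate]
  change _ = _ * ((of (Fin.cons x u : Fin (N + 1) → Fin (N + 1) → R)).submatrix
    (finRotate (N + 1)) id).det
  rw [det_permute, sign_finRotate, ← mul_assoc]
  push_cast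
  rw [← pow_add, Even.neg_one_pow ⟨N, rfl⟩, one_mul]

theorem det_of_snoc_single_last {N : ℕ} (u : Fin N → Fin (N + 1) → R) :
    (of (Fin.snoc u (Pi.single (Fin.last N) 1) : Fin (N + 1) → Fin (N + 1) → R)).det
      = (of fun i => Fin.init (u i)).det := by
  rw [det_succ_row _ (Fin.last N), Finset.sum_eq_single (Fin.last N)]
  · simp only [Fin.val_last, Even.add_self, Even.neg_pow, one_pow, of_apply, Fin.snoc_last,
      Pi.single_eq_same, mul_one, submatrix, Fin.succAbove_last, Fin.snoc_castSucc, one_mul]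
    rfl
  · intro j _ hj
    simp [hj.symm]
  · simp

theorem plucker_snoc_single {N : ℕ} (φ : (Fin (N + 1) → R) →ₗ[R] R)
    (W : Fin (N + 1) → Fin (N + 1) → R) :
    ∑ j : Fin (N + 1), (-1) ^ (j : ℕ) * (of fun i => Fin.init (W (j.succAbove i))).det * φ (W j)
      + (-1) ^ (N + 1) * (of W).det * φ (Pi.single (Fin.last N) 1) = 0 := by
  set z : Fin (N + 2) → Fin (N + 1) → R := Fin.snoc W (Pi.single (Fin.last N) 1)
  have hminor (j : Fin (N + 1)) : (of fun i => z (j.castSucc.succAbove i)).det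
      = (of fun i => Fin.init (W (j.succAbove i))).det := by
    rw [← det_of_snoc_single_last]
    exact congrArg (fun M => (of M).det) (Fin.snoc_comp_castSucc_succAbove _ _ j)
  have h := congrArg φ (sum_det_succAbove_smul_eq_zero z)
  rw [map_sum, map_zero, Fin.sum_univ_castSucc] at h
  simpa only [map_smul, smul_eq_mul, hminor, Fin.val_castSucc, Fin.val_last, Fin.succAbove_last,
    z, Fin.snoc_castSucc, Fin.snoc_last] using h

variable {N : ℕ}

def detSnocRow (u : Fin N → Fin (N + 1) → R) : (Fin (N + 1) → R) →ₗ[R] R :=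
  (detRowAlternating : (Fin (N + 1) → R) [⋀^Fin (N + 1)]→ₗ[R] R).toMultilinearMap.toLinearMap
    (Fin.snoc u 0) (Fin.last N)

theorem detSnocRow_apply (u : Fin N → Fin (N + 1) → R) (x : Fin (N + 1) → R) :
    detSnocRow u x = (of (Fin.snoc u x : Fin (N + 1) → Fin (N + 1) → R)).det := by
  rw [detSnocRow, MultilinearMap.toLinearMap_apply, Fin.update_snoc_last]
  rfl

/-- The shifts `v n, …, v (n + m - 1)` are the rows, so this is the transpose of the paper's
Casoratian matrix. -/
def casoratian {m : ℕ} (v : ℤ → Fin m → R) (n : ℤ) : R :=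
  (of fun j : Fin m => v (n + (j : ℕ))).det

theorem det_of_eq_casoratian {m : ℕ} (g : Fin m → ℤ → R) (n : ℤ) :
    (of fun k j : Fin m => g k (n + (j : ℕ))).det = casoratian (fun l k => g k l) n := by
  rw [← det_transpose]
  rfl

variable (v : ℤ → Fin (N + 1) → R) (n : ℤ)

theorem casoratian_eq_detSnocRow :
    casoratian v n = detSnocRow (fun j : Fin N => v (n + (j : ℕ))) (v (n + N)) := by
  rw [detSnocRow_apply, casoratian,
    ← Fin.snoc_init_self (fun j : Fin (N + 1) => v (n + (j : ℕ)))]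
  rfl

theorem detSnocRow_eq_zero_of_ne_last {j : Fin (N + 1)} (hj : j ≠ Fin.last N) :
    detSnocRow (fun i : Fin N => v (n + (i : ℕ))) (v (n + (j : ℕ))) = 0 := by
  obtain ⟨j, rfl⟩ := Fin.exists_castSucc_eq.mpr hj
  rw [detSnocRow_apply]
  refine det_zero_of_row_eq (Fin.castSucc_lt_last j).ne ?_
  ext k
  simp

theorem detSnocRow_sub_one_eq_zero_of_ne_zero {j : Fin (N + 1)} (hj : j ≠ 0) :
    detSnocRow (fun i : Fin N => v (n + (i : ℕ))) (v (n + (j : ℕ) - 1)) = 0 := by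
  obtain ⟨j, rfl⟩ := Fin.exists_succ_eq.mpr hj
  rw [Fin.val_succ, Nat.cast_succ, ← add_assoc, add_sub_cancel_right]
  exact detSnocRow_eq_zero_of_ne_last v n (Fin.castSucc_lt_last j).ne

theorem casoratian_sub_one :
    casoratian v (n - 1)
      = (-1) ^ N * detSnocRow (fun j : Fin N => v (n + (j : ℕ))) (v (n - 1)) := by
  rw [detSnocRow_apply, ← det_of_cons, casoratian]
  congr 2
  funext j
  refine Fin.cases ?_ (fun j => ?_) j
  · simp
  · simp only [Fin.cons_succ, Fin.val_succ]
    congr 1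
    push_cast
    ring

theorem casoratian_init :
    casoratian (fun m => Fin.init (v m)) n
      = detSnocRow (fun j : Fin N => v (n + (j : ℕ))) (Pi.single (Fin.last N) 1) := by
  rw [detSnocRow_apply, det_of_snoc_single_last]
  rfl

theorem casoratian_backlund (c : R) (w : ℤ → Fin (N + 1) → R)
    (hw : ∀ m, w m = v m - c • v (m - 1)) :
    casoratian v n * casoratian (fun m => Fin.init (w m)) n
      - casoratian w n * casoratian (fun m => Fin.init (v m)) n
      = c * casoratian v (n - 1) * casoratian (fun m => Fin.init (w m)) (n + 1) := by
  set φ := detSnocRow (fun j : Fin N => v (n + (j : ℕ)))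
  have hφw (j : Fin (N + 1)) :
      φ (w (n + (j : ℕ))) = φ (v (n + (j : ℕ))) - c * φ (v (n + (j : ℕ) - 1)) := by
    rw [hw, map_sub, map_smul, smul_eq_mul]
  have hminor_zero :
      (of fun i => Fin.init (w (n + ((Fin.succAbove 0 i : Fin (N + 1)) : ℕ)))).det
        = casoratian (fun m => Fin.init (w m)) (n + 1) := by
    simp only [casoratian, Fin.zero_succAbove, Fin.val_succ, Nat.cast_succ, add_comm, add_left_comm]
  have hplucker := plucker_snoc_single φ (fun j : Fin (N + 1) => w (n + (j : ℕ)))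
  simp only [hφw, mul_sub, Finset.sum_sub_distrib] at hplucker
  rw [Finset.sum_eq_single (Fin.last N)
      (fun j _ hj => by rw [detSnocRow_eq_zero_of_ne_last v n hj, mul_zero]) (by simp),
    Finset.sum_eq_single 0
      (fun j _ hj => by rw [detSnocRow_sub_one_eq_zero_of_ne_zero v n hj, mul_zero, mul_zero])
      (by simp)] at hplucker
  have hlast : φ (v (n + N)) = casoratian v n := (casoratian_eq_detSnocRow v n).symm
  have hsingle : φ (Pi.single (Fin.last N) 1) = casoratian (fun m => Fin.init (v m)) n :=
    (casoratian_init v n).symm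
  simp only [Fin.val_last, Fin.val_zero, Fin.succAbove_last, hminor_zero, hlast, hsingle,
    Nat.cast_zero, add_zero, pow_zero, pow_succ] at hplucker
  rw [casoratian_sub_one v n]
  change _ * casoratian (fun m => Fin.init (w m)) n * _ - _ + _ * casoratian w n * _ = 0
    at hplucker
  have hsq : ((-1 : R) ^ N) ^ 2 = 1 := by rw [← pow_mul, pow_mul', neg_one_sq, one_pow]
  linear_combination (-1) ^ N * hplucker
    - (casoratian v n * casoratian (fun m => Fin.init (w m)) n
      - casoratian w n * casoratian (fun m => Fin.init (v m)) n) * hsq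

end Matrix

theorem stmt_1_general (q β : ℝ) (hq1 : q ≠ 1) (N : ℕ)
    (f : Fin (N + 1) → ℤ → ℝ → ℝ → ℂ)
    (hdy : ∀ (k : Fin (N + 1)) (n : ℤ) (x y : ℝ), x ≠ 0 → y ≠ 0 →
      qdiffY q β (f k n) x y = f k (n - 1) x y)
    (τ τ' : ℤ → ℝ → ℝ → ℂ)
    (hτ : ∀ (n : ℤ) (x y : ℝ),
      τ n x y = Matrix.det (Matrix.of fun k j : Fin N => f k.castSucc (n + (j : ℕ)) x y))
    (hτ' : ∀ (n : ℤ) (x y : ℝ),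
      τ' n x y = Matrix.det (Matrix.of fun k j : Fin (N + 1) => f k (n + (j : ℕ)) x y)) :
    ∀ (n : ℤ) (x y : ℝ), x ≠ 0 → y ≠ 0 →
      qdiffY q β (τ' n) x y * τ n x y - qdiffY q β (τ n) x y * τ' n x y
        = τ' (n - 1) x y * τ (n + 1) x (q ^ β * y) := by
  intro n x y hx hy
  have hc : (((1 - q) * y : ℝ) : ℂ) ≠ 0 :=
    Complex.ofReal_ne_zero.mpr (mul_ne_zero (sub_ne_zero.mpr hq1.symm) hy)
  have hw (m : ℤ) : (fun k => f k m x (q ^ β * y))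
      = (fun k => f k m x y) - (((1 - q) * y : ℝ) : ℂ) • fun k => f k (m - 1) x y := by
    funext k
    have h := qdiffY_mul_eq_sub β (f k m) x hc
    rw [hdy k m x y hx hy] at h
    simp only [Pi.sub_apply, Pi.smul_apply, smul_eq_mul]
    linear_combination h
  have hτ'_eq (m : ℤ) (y' : ℝ) : τ' m x y' = casoratian (fun l k => f k l x y') m :=
    (hτ' m x y').trans (det_of_eq_casoratian (fun k l => f k l x y') m)
  have hτ_eq (m : ℤ) (y' : ℝ) : τ m x y' = casoratian (fun l => Fin.init fun k => f k l x y') m :=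
    (hτ m x y').trans (det_of_eq_casoratian (fun k l => f k.castSucc l x y') m)
  have key := casoratian_backlund _ n _ _ hw
  simp only [← hτ'_eq, ← hτ_eq] at key
  apply mul_right_cancel₀ hc
  linear_combination τ n x y * qdiffY_mul_eq_sub β (τ' n) x hc
    - τ' n x y * qdiffY_mul_eq_sub β (τ n) x hc + key

/-- First equation of the bilinear Bäcklund transformation for the bilinear
q-2DTL equation, verified on Casoratian solutions. -/
theorem stmt_1 (q α β : ℝ) (hq : 0 < q) (hq1 : q ≠ 1) (N : ℕ)
    (f : Fin (N + 1) → ℤ → ℝ → ℝ → ℂ)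
    (hdx : ∀ (k : Fin (N + 1)) (n : ℤ) (x y : ℝ), x ≠ 0 → y ≠ 0 →
      qdiffX q α (f k n) x y = -f k (n + 1) x y)
    (hdy : ∀ (k : Fin (N + 1)) (n : ℤ) (x y : ℝ), x ≠ 0 → y ≠ 0 →
      qdiffY q β (f k n) x y = f k (n - 1) x y)
    (τ τ' : ℤ → ℝ → ℝ → ℂ)
    (hτ : ∀ (n : ℤ) (x y : ℝ),
      τ n x y = Matrix.det (Matrix.of fun k j : Fin N => f k.castSucc (n + (j : ℕ)) x y))
    (hτ' : ∀ (n : ℤ) (x y : ℝ),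
      τ' n x y = Matrix.det (Matrix.of fun k j : Fin (N + 1) => f k (n + (j : ℕ)) x y)) :
    ∀ (n : ℤ) (x y : ℝ), x ≠ 0 → y ≠ 0 →
      qdiffY q β (τ' n) x y * τ n x y - qdiffY q β (τ n) x y * τ' n x y
        = τ' (n - 1) x y * τ (n + 1) x (q ^ β * y) :=
  stmt_1_general q β hq1 N f hdy τ τ' hτ hτ'
end

section
/- Let (X_n)_{n∈ℤ} be a sequence of matrix-valued functions on {(x,y) : x ≠ 0, y ≠ 0} whose values are invertible matrices, and define V_n = σ₂(X_{n+1})X_n⁻¹ and J_n = D₁(X_n)X_n⁻¹. Then the equation D₁(V_n) = σ₂(J_{n+1})V_n − σ₁(V_n)J_n holds identically for every n and every x ≠ 0, y ≠ 0; moreover, the equation D₂(J_n) = V_n − σ₁(V_{n−1}) holds for every n, x ≠ 0, y ≠ 0 if and only if (X_n) satisfies the noncommutative q-2DTL equation D₂(D₁(X_n)X_n⁻¹) = σ₂(X_{n+1})X_n⁻¹ − σ₁(σ₂(X_n)X_{n−1}⁻¹). -/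
/-! The first equation is the q-Leibniz rule for `V_n = σ₂(X_{n+1}) X_n⁻¹`, using that `D₁` commutes
with `σ₂`: it is the q-analogue of `(C A⁻¹)' = (C' C⁻¹)(C A⁻¹) - (C A⁻¹)(A' A⁻¹)`. The second is
the q-2DTL equation with `J_n` and `V_n` unfolded. -/

/-- The q-shift homomorphism in `x` on matrix-valued functions. -/
noncomputable def msig1 (q α : ℝ) {m : ℕ} (f : ℝ → ℝ → Matrix (Fin m) (Fin m) ℂ) :
    ℝ → ℝ → Matrix (Fin m) (Fin m) ℂ :=
  fun x y => f (q ^ α * x) y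

/-- The q-shift homomorphism in `y` on matrix-valued functions. -/
noncomputable def msig2 (q β : ℝ) {m : ℕ} (f : ℝ → ℝ → Matrix (Fin m) (Fin m) ℂ) :
    ℝ → ℝ → Matrix (Fin m) (Fin m) ℂ :=
  fun x y => f x (q ^ β * y)

/-- The q-difference operator in `x` on matrix-valued functions. -/
noncomputable def mD1 (q α : ℝ) {m : ℕ} (f : ℝ → ℝ → Matrix (Fin m) (Fin m) ℂ) :
    ℝ → ℝ → Matrix (Fin m) (Fin m) ℂ :=
  fun x y => ((1 - q) * x)⁻¹ • (f x y - f (q ^ α * x) y)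

/-- The q-difference operator in `y` on matrix-valued functions. -/
noncomputable def mD2 (q β : ℝ) {m : ℕ} (f : ℝ → ℝ → Matrix (Fin m) (Fin m) ℂ) :
    ℝ → ℝ → Matrix (Fin m) (Fin m) ℂ :=
  fun x y => ((1 - q) * y)⁻¹ • (f x y - f x (q ^ β * y))

open Matrix

section

variable {m : ℕ} (q α : ℝ)

lemma msig1_mul (f g : ℝ → ℝ → Matrix (Fin m) (Fin m) ℂ) :
    msig1 q α (f * g) = msig1 q α f * msig1 q α g :=
  rfl

lemma mD1_msig2 (β : ℝ) (f : ℝ → ℝ → Matrix (Fin m) (Fin m) ℂ) :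
    mD1 q α (msig2 q β f) = msig2 q β (mD1 q α f) :=
  rfl

lemma mD1_mul (f g : ℝ → ℝ → Matrix (Fin m) (Fin m) ℂ) :
    mD1 q α (f * g) = mD1 q α f * g + msig1 q α f * mD1 q α g := by
  funext x y
  simp only [mD1, msig1, Pi.mul_apply, Pi.add_apply, smul_mul_assoc, mul_smul_comm, ← smul_add]
  congr 1
  noncomm_ring

lemma mD1_inv {f : ℝ → ℝ → Matrix (Fin m) (Fin m) ℂ} (hf : ∀ x y, IsUnit (f x y)) :
    mD1 q α f⁻¹ = -(msig1 q α f⁻¹ * mD1 q α f * f⁻¹) := by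
  funext x y
  have hA := (isUnit_iff_isUnit_det _).mp (hf x y)
  have hB := (isUnit_iff_isUnit_det _).mp (hf (q ^ α * x) y)
  simp only [mD1, msig1, Pi.mul_apply, Pi.inv_apply, Pi.neg_apply, smul_mul_assoc,
    mul_smul_comm, ← smul_neg]
  congr 1
  rw [mul_sub, sub_mul, mul_nonsing_inv_cancel_right _ _ hA, nonsing_inv_mul _ hB, one_mul,
    neg_sub]

lemma mD1_mul_inv {C A : ℝ → ℝ → Matrix (Fin m) (Fin m) ℂ} (hC : ∀ x y, IsUnit (C x y))
    (hA : ∀ x y, IsUnit (A x y)) :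
    mD1 q α (C * A⁻¹)
      = mD1 q α C * C⁻¹ * (C * A⁻¹) - msig1 q α (C * A⁻¹) * (mD1 q α A * A⁻¹) := by
  have hCC : C⁻¹ * C = 1 := funext₂ fun x y =>
    nonsing_inv_mul _ ((isUnit_iff_isUnit_det _).mp (hC x y))
  rw [mD1_mul, mD1_inv q α hA, msig1_mul, mul_assoc (mD1 q α C), ← mul_assoc C⁻¹, hCC, one_mul]
  noncomm_ring

end

theorem stmt_3_general (q α β : ℝ) (m : ℕ)
    (X : ℤ → ℝ → ℝ → Matrix (Fin m) (Fin m) ℂ)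
    (hXinv : ∀ (n : ℤ) (x y : ℝ), IsUnit (X n x y))
    (V J : ℤ → ℝ → ℝ → Matrix (Fin m) (Fin m) ℂ)
    (hV : ∀ (n : ℤ) (x y : ℝ), V n x y = X (n + 1) x (q ^ β * y) * (X n x y)⁻¹)
    (hJ : ∀ (n : ℤ) (x y : ℝ), J n x y = mD1 q α (X n) x y * (X n x y)⁻¹) :
    (∀ (n : ℤ) (x y : ℝ), x ≠ 0 → y ≠ 0 →
        mD1 q α (V n) x y
          = J (n + 1) x (q ^ β * y) * V n x y - V n (q ^ α * x) y * J n x y)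
      ∧ ((∀ (n : ℤ) (x y : ℝ), x ≠ 0 → y ≠ 0 →
            mD2 q β (J n) x y = V n x y - V (n - 1) (q ^ α * x) y)
          ↔ (∀ (n : ℤ) (x y : ℝ), x ≠ 0 → y ≠ 0 →
            mD2 q β (fun u v => mD1 q α (X n) u v * (X n u v)⁻¹) x y
              = X (n + 1) x (q ^ β * y) * (X n x y)⁻¹
                - X n (q ^ α * x) (q ^ β * y) * (X (n - 1) (q ^ α * x) y)⁻¹)) := by
  have hVfun : ∀ n, V n = msig2 q β (X (n + 1)) * (X n)⁻¹ := fun n => funext₂ (hV n)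
  have hJfun : ∀ n, J n = mD1 q α (X n) * (X n)⁻¹ := fun n => funext₂ (hJ n)
  refine ⟨fun n x y _ _ => ?_, by simp only [hJfun, hV, sub_add_cancel]; rfl⟩
  have hlax : mD1 q α (V n) = msig2 q β (J (n + 1)) * V n - msig1 q α (V n) * J n := by
    rw [hVfun, hJfun, hJfun, mD1_mul_inv q α (C := msig2 q β (X (n + 1)))
      (fun x y => hXinv (n + 1) x (q ^ β * y)) (hXinv n), mD1_msig2]
    rfl
  exact congrFun (congrFun hlax x) y

/-- The Lax pair compatibility for the noncommutative q-2DTL equation: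
with `V_n = σ₂(X_{n+1})X_n⁻¹` and `J_n = D₁(X_n)X_n⁻¹`, the first compatibility
equation holds identically, and the second is equivalent to the nc q-2DTL
equation for `X`. -/
theorem stmt_3 (q α β : ℝ) (hq : 0 < q) (hq1 : q ≠ 1) (m : ℕ) (hm : 1 ≤ m)
    (X : ℤ → ℝ → ℝ → Matrix (Fin m) (Fin m) ℂ)
    (hXinv : ∀ (n : ℤ) (x y : ℝ), IsUnit (X n x y))
    (V J : ℤ → ℝ → ℝ → Matrix (Fin m) (Fin m) ℂ)
    (hV : ∀ (n : ℤ) (x y : ℝ), V n x y = X (n + 1) x (q ^ β * y) * (X n x y)⁻¹)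
    (hJ : ∀ (n : ℤ) (x y : ℝ), J n x y = mD1 q α (X n) x y * (X n x y)⁻¹) :
    (∀ (n : ℤ) (x y : ℝ), x ≠ 0 → y ≠ 0 →
        mD1 q α (V n) x y
          = J (n + 1) x (q ^ β * y) * V n x y - V n (q ^ α * x) y * J n x y)
      ∧ ((∀ (n : ℤ) (x y : ℝ), x ≠ 0 → y ≠ 0 →
            mD2 q β (J n) x y = V n x y - V (n - 1) (q ^ α * x) y)
          ↔ (∀ (n : ℤ) (x y : ℝ), x ≠ 0 → y ≠ 0 →
            mD2 q β (fun u v => mD1 q α (X n) u v * (X n u v)⁻¹) x y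
              = X (n + 1) x (q ^ β * y) * (X n x y)⁻¹
                - X n (q ^ α * x) (q ^ β * y) * (X (n - 1) (q ^ α * x) y)⁻¹)) :=
  stmt_3_general q α β m X hXinv V J hV hJ
end

section
/- Let (V_n), (J_n) be sequences of matrix-valued functions on {(x,y) : x ≠ 0, y ≠ 0}, and let (θ_n) and (φ_n) both satisfy the Lax pair D₂(θ_{n+1}) = V_n θ_n, D₁(θ_n) = −θ_{n+1} + J_n θ_n and D₂(φ_{n+1}) = V_n φ_n, D₁(φ_n) = −φ_{n+1} + J_n φ_n for all n, with every value θ_n(x,y) an invertible matrix. Define φ̃_n = −φ_{n+1} + θ_{n+1}θ_n⁻¹φ_n, Ṽ_n = σ₂(θ_{n+2}θ_{n+1}⁻¹)·V_n·θ_nθ_{n+1}⁻¹ and J̃_n = J_{n+1} + σ₁(θ_{n+1}θ_n⁻¹) − θ_{n+2}θ_{n+1}⁻¹. Then (φ̃_n) satisfies the transformed Lax pair: D₂(φ̃_{n+1}) = Ṽ_n φ̃_n and D₁(φ̃_n) = −φ̃_{n+1} + J̃_n φ̃_n for all n and all x ≠ 0, y ≠ 0. -/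
open scoped Ring

section Darboux

variable {R : Type*} [Ring R]

noncomputable def darboux (θ φ : ℤ → R) (n : ℤ) : R := -φ (n + 1) + θ (n + 1) * (θ n)⁻¹ʳ * φ n

variable {θ φ θ' φ' : ℤ → R}

theorem inverse_mul_darboux {n : ℤ} (h : IsUnit (θ (n + 1))) :
    (θ (n + 1))⁻¹ʳ * darboux θ φ n = (θ n)⁻¹ʳ * φ n - (θ (n + 1))⁻¹ʳ * φ (n + 1) := by
  rw [darboux, mul_add, mul_neg, ← mul_assoc, ← mul_assoc, Ring.inverse_mul_cancel _ h, one_mul]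
  abel

theorem eq_mul_sub_darboux_of_y_shift (K : ℤ → R) {n : ℤ} (h : IsUnit (θ n))
    (hθK : θ' (n + 1) = θ (n + 1) - K n * θ n) (hφK : φ' (n + 1) = φ (n + 1) - K n * φ n) :
    φ' (n + 1) = θ' (n + 1) * ((θ n)⁻¹ʳ * φ n) - darboux θ φ n := by
  rw [hθK, hφK, darboux, sub_mul, mul_assoc (K n), Ring.mul_inverse_cancel_left _ _ h, mul_assoc]
  abel

/- With `θ' n = σ₂(θ n)` and `K n = (1 - q) y V n`, the hypotheses are the `y`-half of the Lax
pair at a fixed point `(x, y)`. -/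
theorem darboux_sub_of_y_shift (K : ℤ → R) (hθ : ∀ n, IsUnit (θ n)) (hθ' : ∀ n, IsUnit (θ' n))
    (hθK : ∀ n, θ' (n + 1) = θ (n + 1) - K n * θ n)
    (hφK : ∀ n, φ' (n + 1) = φ (n + 1) - K n * φ n) (n : ℤ) :
    darboux θ φ (n + 1) - darboux θ' φ' (n + 1)
      = θ' (n + 2) * (θ' (n + 1))⁻¹ʳ * K n * (θ n * (θ (n + 1))⁻¹ʳ) * darboux θ φ n := by
  have hn : n + 1 + 1 = n + 2 := by ring
  have h₀ := eq_mul_sub_darboux_of_y_shift K (hθ n) (hθK n) (hφK n)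
  have h₁ := eq_mul_sub_darboux_of_y_shift K (hθ (n + 1)) (hθK (n + 1)) (hφK (n + 1))
  have hinv : (θ' (n + 1))⁻¹ʳ - (θ (n + 1))⁻¹ʳ
      = (θ' (n + 1))⁻¹ʳ * (K n * θ n) * (θ (n + 1))⁻¹ʳ := by
    rw [Ring.inverse_sub_inverse (iff_of_true (hθ' _) (hθ _)), hθK, sub_sub_cancel]
  have hshift : darboux θ' φ' (n + 1)
      = -φ' (n + 2) + θ' (n + 2) * (θ' (n + 1))⁻¹ʳ * φ' (n + 1) := by
    rw [darboux, hn]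
  rw [hn] at h₁
  calc darboux θ φ (n + 1) - darboux θ' φ' (n + 1)
      = θ' (n + 2) * ((θ' (n + 1))⁻¹ʳ * darboux θ φ n
          - ((θ n)⁻¹ʳ * φ n - (θ (n + 1))⁻¹ʳ * φ (n + 1))) := by
        rw [hshift, h₁, h₀]
        simp only [mul_sub, mul_assoc, Ring.inverse_mul_cancel_left _ _ (hθ' (n + 1))]
        abel
    _ = θ' (n + 2) * ((θ' (n + 1))⁻¹ʳ - (θ (n + 1))⁻¹ʳ) * darboux θ φ n := by
        rw [← inverse_mul_darboux (hθ _)]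
        simp only [mul_sub, sub_mul, mul_assoc]
    _ = _ := by rw [hinv]; simp only [mul_assoc]

variable {𝕜 : Type*} [CommSemiring 𝕜] [Algebra 𝕜 R]

theorem eq_mul_sub_darboux_of_x_shift (l : 𝕜) (J : ℤ → R) {n : ℤ} (h : IsUnit (θ n))
    (hθJ : θ' n = θ n + l • θ (n + 1) - l • (J n * θ n))
    (hφJ : φ' n = φ n + l • φ (n + 1) - l • (J n * φ n)) :
    φ' n = θ' n * ((θ n)⁻¹ʳ * φ n) - l • darboux θ φ n := by
  rw [hθJ, hφJ, darboux]
  simp only [add_mul, sub_mul, smul_mul_assoc, mul_assoc, Ring.mul_inverse_cancel_left _ _ h,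
    smul_add, smul_neg]
  abel

/- With `θ' n = σ₁(θ n)` and `l = (1 - q) x`, the hypotheses are the `x`-half of the Lax pair at
a fixed point `(x, y)`. -/
theorem darboux_sub_of_x_shift (l : 𝕜) (J : ℤ → R) (hθ : ∀ n, IsUnit (θ n))
    (hθ' : ∀ n, IsUnit (θ' n))
    (hθJ : ∀ n, θ' n = θ n + l • θ (n + 1) - l • (J n * θ n))
    (hφJ : ∀ n, φ' n = φ n + l • φ (n + 1) - l • (J n * φ n)) (n : ℤ) :
    darboux θ φ n - darboux θ' φ' n
      = l • (-darboux θ φ (n + 1)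
          + (J (n + 1) + θ' (n + 1) * (θ' n)⁻¹ʳ - θ (n + 2) * (θ (n + 1))⁻¹ʳ) * darboux θ φ n) := by
  have hn : n + 1 + 1 = n + 2 := by ring
  have h₀ := eq_mul_sub_darboux_of_x_shift l J (hθ n) (hθJ n) (hφJ n)
  have h₁ := eq_mul_sub_darboux_of_x_shift l J (hθ (n + 1)) (hθJ (n + 1)) (hφJ (n + 1))
  have hratio : θ' (n + 1) * (θ (n + 1))⁻¹ʳ
      = 1 + l • (θ (n + 2) * (θ (n + 1))⁻¹ʳ) - l • J (n + 1) := by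
    rw [hθJ, hn]
    simp only [add_mul, sub_mul, smul_mul_assoc, mul_assoc, Ring.mul_inverse_cancel _ (hθ _),
      mul_one]
  have hshift : darboux θ' φ' n
      = -φ' (n + 1) + θ' (n + 1) * (θ' n)⁻¹ʳ * φ' n := rfl
  calc darboux θ φ n - darboux θ' φ' n
      = darboux θ φ n - (θ' (n + 1) * (θ (n + 1))⁻¹ʳ * darboux θ φ n + l • darboux θ φ (n + 1)
          - l • (θ' (n + 1) * (θ' n)⁻¹ʳ * darboux θ φ n)) := by
        rw [hshift, h₁, h₀, mul_assoc _ _ (darboux θ φ n), inverse_mul_darboux (hθ _)]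
        simp only [mul_sub, mul_assoc, Ring.inverse_mul_cancel_left _ _ (hθ' n), mul_smul_comm]
        abel
    _ = _ := by
        rw [hratio]
        simp only [add_mul, sub_mul, smul_mul_assoc, one_mul, smul_add, smul_sub, smul_neg]
        abel

end Darboux

section QDifference

variable {q α β : ℝ} {m : ℕ} {f g : ℝ → ℝ → Matrix (Fin m) (Fin m) ℂ} {x y : ℝ}

theorem mD1_eq_iff (hx : (1 - q) * x ≠ 0) {A : Matrix (Fin m) (Fin m) ℂ} :
    mD1 q α f x y = A ↔ f x y - f (q ^ α * x) y = ((1 - q) * x) • A :=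
  inv_smul_eq_iff₀ hx

theorem mD2_eq_iff (hy : (1 - q) * y ≠ 0) {A : Matrix (Fin m) (Fin m) ℂ} :
    mD2 q β f x y = A ↔ f x y - f x (q ^ β * y) = ((1 - q) * y) • A :=
  inv_smul_eq_iff₀ hy

theorem shift_eq_of_mD1_eq (hx : (1 - q) * x ≠ 0) {J : Matrix (Fin m) (Fin m) ℂ}
    (h : mD1 q α f x y = -g x y + J * f x y) :
    f (q ^ α * x) y = f x y + ((1 - q) * x) • g x y - ((1 - q) * x) • (J * f x y) := by
  rw [← sub_sub_cancel (f x y) (f (q ^ α * x) y), (mD1_eq_iff hx).1 h, smul_add, smul_neg]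
  abel

theorem shift_eq_of_mD2_eq (hy : (1 - q) * y ≠ 0) {V : Matrix (Fin m) (Fin m) ℂ}
    (h : mD2 q β g x y = V * f x y) :
    g x (q ^ β * y) = g x y - (((1 - q) * y) • V) * f x y := by
  rw [smul_mul_assoc, ← (mD2_eq_iff hy).1 h, sub_sub_cancel]

end QDifference

theorem stmt_4_general (q α β : ℝ) (hq1 : q ≠ 1) (m : ℕ)
    (V J θ φ : ℤ → ℝ → ℝ → Matrix (Fin m) (Fin m) ℂ)
    (hθ2 : ∀ (n : ℤ) (x y : ℝ), x ≠ 0 → y ≠ 0 →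
      mD2 q β (θ (n + 1)) x y = V n x y * θ n x y)
    (hθ1 : ∀ (n : ℤ) (x y : ℝ), x ≠ 0 → y ≠ 0 →
      mD1 q α (θ n) x y = -θ (n + 1) x y + J n x y * θ n x y)
    (hφ2 : ∀ (n : ℤ) (x y : ℝ), x ≠ 0 → y ≠ 0 →
      mD2 q β (φ (n + 1)) x y = V n x y * φ n x y)
    (hφ1 : ∀ (n : ℤ) (x y : ℝ), x ≠ 0 → y ≠ 0 →
      mD1 q α (φ n) x y = -φ (n + 1) x y + J n x y * φ n x y)
    (hθinv : ∀ (n : ℤ) (x y : ℝ), IsUnit (θ n x y))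
    (φt Vt Jt : ℤ → ℝ → ℝ → Matrix (Fin m) (Fin m) ℂ)
    (hφt : ∀ (n : ℤ) (x y : ℝ),
      φt n x y = -φ (n + 1) x y + θ (n + 1) x y * (θ n x y)⁻¹ * φ n x y)
    (hVt : ∀ (n : ℤ) (x y : ℝ),
      Vt n x y = (θ (n + 2) x (q ^ β * y) * (θ (n + 1) x (q ^ β * y))⁻¹)
        * V n x y * (θ n x y * (θ (n + 1) x y)⁻¹))
    (hJt : ∀ (n : ℤ) (x y : ℝ),
      Jt n x y = J (n + 1) x y + θ (n + 1) (q ^ α * x) y * (θ n (q ^ α * x) y)⁻¹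
        - θ (n + 2) x y * (θ (n + 1) x y)⁻¹) :
    ∀ (n : ℤ) (x y : ℝ), x ≠ 0 → y ≠ 0 →
      mD2 q β (φt (n + 1)) x y = Vt n x y * φt n x y
        ∧ mD1 q α (φt n) x y = -φt (n + 1) x y + Jt n x y * φt n x y := by
  intro n x y hx hy
  have h1q : (1 : ℝ) - q ≠ 0 := sub_ne_zero.mpr hq1.symm
  have hφt_eq : ∀ n x y, φt n x y = darboux (θ · x y) (φ · x y) n := fun n x y => by
    rw [hφt, darboux, Matrix.nonsing_inv_eq_ringInverse]
  constructor
  · have hy' := mul_ne_zero h1q hy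
    rw [mD2_eq_iff hy']
    simp only [hφt_eq]
    rw [darboux_sub_of_y_shift _ (hθinv · x y) (hθinv · x _)
      (fun n => shift_eq_of_mD2_eq hy' (hθ2 n x y hx hy))
      (fun n => shift_eq_of_mD2_eq hy' (hφ2 n x y hx hy)), hVt]
    simp only [Matrix.nonsing_inv_eq_ringInverse, smul_mul_assoc, mul_smul_comm]
  · have hx' := mul_ne_zero h1q hx
    rw [mD1_eq_iff hx']
    simp only [hφt_eq]
    rw [darboux_sub_of_x_shift _ _ (hθinv · x y) (hθinv · _ y)
      (fun n => shift_eq_of_mD1_eq hx' (hθ1 n x y hx hy))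
      (fun n => shift_eq_of_mD1_eq hx' (hφ1 n x y hx hy)), hJt]
    simp only [Matrix.nonsing_inv_eq_ringInverse]

/-- The Darboux transformation for the noncommutative q-2DTL Lax pair maps
eigenfunctions to eigenfunctions of the transformed Lax pair. -/
theorem stmt_4 (q α β : ℝ) (hq : 0 < q) (hq1 : q ≠ 1) (m : ℕ) (hm : 1 ≤ m)
    (V J θ φ : ℤ → ℝ → ℝ → Matrix (Fin m) (Fin m) ℂ)
    (hθ2 : ∀ (n : ℤ) (x y : ℝ), x ≠ 0 → y ≠ 0 →
      mD2 q β (θ (n + 1)) x y = V n x y * θ n x y)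
    (hθ1 : ∀ (n : ℤ) (x y : ℝ), x ≠ 0 → y ≠ 0 →
      mD1 q α (θ n) x y = -θ (n + 1) x y + J n x y * θ n x y)
    (hφ2 : ∀ (n : ℤ) (x y : ℝ), x ≠ 0 → y ≠ 0 →
      mD2 q β (φ (n + 1)) x y = V n x y * φ n x y)
    (hφ1 : ∀ (n : ℤ) (x y : ℝ), x ≠ 0 → y ≠ 0 →
      mD1 q α (φ n) x y = -φ (n + 1) x y + J n x y * φ n x y)
    (hθinv : ∀ (n : ℤ) (x y : ℝ), IsUnit (θ n x y))
    (φt Vt Jt : ℤ → ℝ → ℝ → Matrix (Fin m) (Fin m) ℂ)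
    (hφt : ∀ (n : ℤ) (x y : ℝ),
      φt n x y = -φ (n + 1) x y + θ (n + 1) x y * (θ n x y)⁻¹ * φ n x y)
    (hVt : ∀ (n : ℤ) (x y : ℝ),
      Vt n x y = (θ (n + 2) x (q ^ β * y) * (θ (n + 1) x (q ^ β * y))⁻¹)
        * V n x y * (θ n x y * (θ (n + 1) x y)⁻¹))
    (hJt : ∀ (n : ℤ) (x y : ℝ),
      Jt n x y = J (n + 1) x y + θ (n + 1) (q ^ α * x) y * (θ n (q ^ α * x) y)⁻¹
        - θ (n + 2) x y * (θ (n + 1) x y)⁻¹) :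
    ∀ (n : ℤ) (x y : ℝ), x ≠ 0 → y ≠ 0 →
      mD2 q β (φt (n + 1)) x y = Vt n x y * φt n x y
        ∧ mD1 q α (φt n) x y = -φt (n + 1) x y + Jt n x y * φt n x y :=
  stmt_4_general q α β hq1 m V J θ φ hθ2 hθ1 hφ2 hφ1 hθinv φt Vt Jt hφt hVt hJt
end

section
/- Assume every θ^{(k)}_n[k] (1 ≤ k ≤ N, n ∈ ℤ) is invertible and that for every n ∈ ℤ the N×N matrix C(n) over R with entries C(n)_{j,i} = θ_{n+N−j, i} (1 ≤ j, i ≤ N) is invertible. Then for every n ∈ ℤ the N-fold Darboux iterate has the quasideterminant closed form φ_n[N+1] = (−1)^N ( φ_{n+N} − Σ_{i=1}^{N} Σ_{j=1}^{N} θ_{n+N, i} · (C(n)⁻¹)_{i,j} · φ_{n+N−j} ). -/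
/-!
The `N`-fold transform acts on every sequence `g` by one and the same left-linear combination
`g ↦ ∑_{m ≤ N} a_m g_{n+m}`, with `a_N = (-1)^N` and coefficients depending only on the
`θ^{(k)}[k]`. Since the `k`-th step kills `θ^{(k)}[k]`, the `N`-fold transform annihilates every
seed `θ_i`; these `N` equations say that the row `(a_{N-1}, …, a_0)` times `C(n)` is
`-(-1)^N θ_{n+N}`, so the row is `-(-1)^N θ_{n+N} C(n)⁻¹`, and substituting it into the
expansion of `φ_n[N+1]` gives the formula.
-/

open Finset Matrix

theorem neg_add_mul_inverse_mul_cancel {R : Type*} [Ring R] {x : R} (hx : IsUnit x) (y : R) :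
    -y + y * Ring.inverse x * x = 0 := by
  rw [mul_assoc, Ring.inverse_mul_cancel x hx, mul_one, neg_add_cancel]

theorem dotProduct_eq_of_vecMul_eq {R ι : Type*} [Semiring R] [Fintype ι] [DecidableEq ι]
    {C Cinv : Matrix ι ι R} (hC : C * Cinv = 1) {v u : ι → R} (h : v ᵥ* C = u) (x : ι → R) :
    v ⬝ᵥ x = u ⬝ᵥ (Cinv *ᵥ x) := by
  rw [dotProduct_mulVec, ← h, vecMul_vecMul, hC, vecMul_one]

namespace Darboux

variable {R : Type*} [Ring R]

/-- `coeff c k n m` is the coefficient of `g (n + m)` at `n` after applying to a sequence `g` the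
`k` steps `g ↦ -g (· + 1) + c j · * g`, `j = 0, …, k - 1`. -/
def coeff (c : ℕ → ℤ → R) : ℕ → ℤ → ℕ → R
  | 0, _, 0 => 1
  | 0, _, _ + 1 => 0
  | k + 1, n, 0 => c k n * coeff c k n 0
  | k + 1, n, m + 1 => c k n * coeff c k n (m + 1) - coeff c k (n + 1) m

def iterate (c : ℕ → ℤ → R) (k : ℕ) (g : ℤ → R) (n : ℤ) : R :=
  ∑ m ∈ range (k + 1), coeff c k n m * g (n + m)

theorem coeff_eq_zero_of_lt (c : ℕ → ℤ → R) {k m : ℕ} (h : k < m) (n : ℤ) :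
    coeff c k n m = 0 := by
  induction k generalizing n m with
  | zero => obtain ⟨m, rfl⟩ := Nat.exists_eq_add_one.mpr h; rfl
  | succ k ih =>
    obtain ⟨m, rfl⟩ := Nat.exists_eq_add_one.mpr (Nat.zero_lt_of_lt h)
    simp only [coeff, ih (by omega : k < m + 1), ih (by omega : k < m), mul_zero, sub_zero]

theorem coeff_self (c : ℕ → ℤ → R) (k : ℕ) (n : ℤ) : coeff c k n k = (-1) ^ k := by
  induction k generalizing n with
  | zero => exact (pow_zero _).symm
  | succ k ih => simp [coeff, coeff_eq_zero_of_lt, ih, pow_succ]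

theorem iterate_zero (c : ℕ → ℤ → R) (g : ℤ → R) (n : ℤ) : iterate c 0 g n = g n := by
  simp [iterate, coeff]

theorem iterate_succ (c : ℕ → ℤ → R) (k : ℕ) (g : ℤ → R) (n : ℤ) :
    iterate c (k + 1) g n = -iterate c k g (n + 1) + c k n * iterate c k g n := by
  have hlow : iterate c k g n = ∑ m ∈ range (k + 2), coeff c k n m * g (n + m) := by
    rw [sum_range_succ _ (k + 1), coeff_eq_zero_of_lt c (Nat.lt_succ_self k), zero_mul, add_zero,
      iterate]
  have hshift :
      iterate c k g (n + 1) = ∑ m ∈ range (k + 1), coeff c k (n + 1) m * g (n + ↑(m + 1)) := by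
    refine sum_congr rfl fun m _ => ?_
    push_cast; ring_nf
  rw [hlow, hshift, iterate, sum_range_succ', sum_range_succ' _ (k + 1), mul_add, mul_sum]
  simp only [coeff, sub_mul, sum_sub_distrib, mul_assoc]
  abel

theorem eq_iterate_of_recursion {c : ℕ → ℤ → R} {K : ℕ} {f : ℤ → ℕ → R}
    (hf : ∀ n k, k < K → f n (k + 1) = -f (n + 1) k + c k n * f n k) {k : ℕ} (hk : k ≤ K)
    (n : ℤ) :
    f n k = iterate c k (f · 0) n := by
  induction k generalizing n with
  | zero => rw [iterate_zero]
  | succ k ih => rw [hf n k hk, iterate_succ, ih (by omega), ih (by omega)]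

theorem iterate_eq_dotProduct_add (c : ℕ → ℤ → R) (N : ℕ) (g : ℤ → R) (n : ℤ) :
    iterate c N g n =
      (fun j : Fin N => coeff c N n (N - 1 - j)) ⬝ᵥ (fun j : Fin N => g (n + N - 1 - j))
        + (-1) ^ N * g (n + N) := by
  rw [iterate, sum_range_succ, coeff_self, dotProduct, ← sum_range_reflect,
    ← Fin.sum_univ_eq_sum_range]
  congr 1
  refine Fintype.sum_congr _ _ fun j => ?_
  have hj := j.isLt
  congr 2
  push_cast [Nat.cast_sub (by omega : 1 ≤ N), Nat.cast_sub (by omega : (j : ℕ) ≤ N - 1)]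
  ring

noncomputable def pivotRatio {N : ℕ} (th : Fin N → ℤ → ℕ → R) (k : ℕ) (n : ℤ) : R :=
  if hk : k < N then th ⟨k, hk⟩ (n + 1) k * Ring.inverse (th ⟨k, hk⟩ n k) else 0

theorem seed_eq_zero_of_lt {N : ℕ} {th : Fin N → ℤ → ℕ → R}
    (hthS : ∀ (i : Fin N) (n : ℤ) (k : ℕ) (hk : k < N),
      th i n (k + 1) = -th i (n + 1) k
        + th ⟨k, hk⟩ (n + 1) k * Ring.inverse (th ⟨k, hk⟩ n k) * th i n k)
    (hunit : ∀ (k : ℕ) (hk : k < N) (n : ℤ), IsUnit (th ⟨k, hk⟩ n k))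
    {k : ℕ} (hk : k ≤ N) (i : Fin N) (hi : (i : ℕ) < k) (n : ℤ) : th i n k = 0 := by
  induction k generalizing n with
  | zero => exact absurd hi (Nat.not_lt_zero _)
  | succ k ih =>
    rcases Nat.lt_succ_iff_lt_or_eq.mp hi with hlt | rfl
    · rw [hthS i n k hk, ih (by omega) hlt, ih (by omega) hlt, mul_zero, neg_zero, zero_add]
    · exact hthS i n i hk ▸ neg_add_mul_inverse_mul_cancel (hunit i hk n) _

end Darboux

theorem stmt_7_general {R : Type*} [Ring R] (N : ℕ)
    (θ : ℤ → Fin N → R) (φ : ℤ → R)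
    (th : Fin N → ℤ → ℕ → R) (ph : ℤ → ℕ → R)
    (hth0 : ∀ (i : Fin N) (n : ℤ), th i n 0 = θ n i)
    (hph0 : ∀ n : ℤ, ph n 0 = φ n)
    (hthS : ∀ (i : Fin N) (n : ℤ) (k : ℕ) (hk : k < N),
      th i n (k + 1) = -th i (n + 1) k
        + th ⟨k, hk⟩ (n + 1) k * Ring.inverse (th ⟨k, hk⟩ n k) * th i n k)
    (hphS : ∀ (n : ℤ) (k : ℕ) (hk : k < N),
      ph n (k + 1) = -ph (n + 1) k
        + th ⟨k, hk⟩ (n + 1) k * Ring.inverse (th ⟨k, hk⟩ n k) * ph n k)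
    (hunit : ∀ (k : ℕ) (hk : k < N) (n : ℤ), IsUnit (th ⟨k, hk⟩ n k))
    (C : ℤ → Matrix (Fin N) (Fin N) R)
    (hC : ∀ (n : ℤ) (j i : Fin N), C n j i = θ (n + (N : ℤ) - 1 - ((j : ℕ) : ℤ)) i)
    (Cinv : ℤ → Matrix (Fin N) (Fin N) R)
    (hCl : ∀ n : ℤ, C n * Cinv n = 1) :
    ∀ n : ℤ, ph n N = (-1 : R) ^ N *
      (φ (n + (N : ℤ)) - ∑ i : Fin N, ∑ j : Fin N,
        θ (n + (N : ℤ)) i * Cinv n i j * φ (n + (N : ℤ) - 1 - ((j : ℕ) : ℤ))) := by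
  intro n
  set c := Darboux.pivotRatio th with hc
  have hθ (i : Fin N) : th i n N = Darboux.iterate c N (θ · i) n := by
    simpa only [hth0] using Darboux.eq_iterate_of_recursion (f := th i) (c := c)
      (fun m k hk => by rw [hthS i m k hk, hc, Darboux.pivotRatio, dif_pos hk]) le_rfl n
  have hφ : ph n N = Darboux.iterate c N φ n := by
    simpa only [hph0] using Darboux.eq_iterate_of_recursion (f := ph) (c := c)
      (fun m k hk => by rw [hphS m k hk, hc, Darboux.pivotRatio, dif_pos hk]) le_rfl n
  set v : Fin N → R := fun j => Darboux.coeff c N n (N - 1 - j)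
  -- column `i` of `C n` is the seed `θ_i`, which the `N`-fold transform annihilates
  have hvC : v ᵥ* C n = -((-1 : R) ^ N • θ (n + N)) := by
    funext i
    have hi := hθ i
    rw [Darboux.seed_eq_zero_of_lt hthS hunit le_rfl i i.isLt,
      Darboux.iterate_eq_dotProduct_add] at hi
    simp only [vecMul, dotProduct, hC, Pi.neg_apply, Pi.smul_apply, smul_eq_mul]
    exact eq_neg_of_add_eq_zero_left hi.symm
  have hexpand : θ (n + N) ⬝ᵥ (Cinv n *ᵥ fun j : Fin N => φ (n + N - 1 - j)) =
      ∑ i : Fin N, ∑ j : Fin N, θ (n + N) i * Cinv n i j * φ (n + N - 1 - j) := by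
    simp only [dotProduct, mulVec, mul_sum, mul_assoc]
  rw [hφ, Darboux.iterate_eq_dotProduct_add, dotProduct_eq_of_vecMul_eq (hCl n) hvC,
    neg_dotProduct, smul_dotProduct, hexpand, smul_eq_mul, mul_sub]
  abel

/-- Quasideterminant (quasicasoratian) closed form of the `N`-fold iterated
Darboux transform `φ_n[N+1]` for the noncommutative q-2DTL equation.
Here `th i n k` stands for `θ^{(i)}_n[k+1]` and `ph n k` for `φ_n[k+1]`
(the iteration index is shifted so that it starts at `0` instead of `1`),
and `C n` is the Casorati-type coefficient matrix with entries
`C(n)_{j,i} = θ_{n+N-1-j,i}` (indices starting from `0`). -/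
theorem stmt_7 {R : Type*} [Ring R] (N : ℕ)
    (θ : ℤ → Fin N → R) (φ : ℤ → R)
    (th : Fin N → ℤ → ℕ → R) (ph : ℤ → ℕ → R)
    (hth0 : ∀ (i : Fin N) (n : ℤ), th i n 0 = θ n i)
    (hph0 : ∀ n : ℤ, ph n 0 = φ n)
    (hthS : ∀ (i : Fin N) (n : ℤ) (k : ℕ) (hk : k < N),
      th i n (k + 1) = -th i (n + 1) k
        + th ⟨k, hk⟩ (n + 1) k * Ring.inverse (th ⟨k, hk⟩ n k) * th i n k)
    (hphS : ∀ (n : ℤ) (k : ℕ) (hk : k < N),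
      ph n (k + 1) = -ph (n + 1) k
        + th ⟨k, hk⟩ (n + 1) k * Ring.inverse (th ⟨k, hk⟩ n k) * ph n k)
    (hunit : ∀ (k : ℕ) (hk : k < N) (n : ℤ), IsUnit (th ⟨k, hk⟩ n k))
    (C : ℤ → Matrix (Fin N) (Fin N) R)
    (hC : ∀ (n : ℤ) (j i : Fin N), C n j i = θ (n + (N : ℤ) - 1 - ((j : ℕ) : ℤ)) i)
    (Cinv : ℤ → Matrix (Fin N) (Fin N) R)
    (hCl : ∀ n : ℤ, C n * Cinv n = 1) (hCr : ∀ n : ℤ, Cinv n * C n = 1) :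
    ∀ n : ℤ, ph n N = (-1 : R) ^ N *
      (φ (n + (N : ℤ)) - ∑ i : Fin N, ∑ j : Fin N,
        θ (n + (N : ℤ)) i * Cinv n i j * φ (n + (N : ℤ) - 1 - ((j : ℕ) : ℤ))) :=
  stmt_7_general N θ φ th ph hth0 hph0 hthS hphS hunit C hC Cinv hCl
end

section
/- (Noncommutative Jacobi / Sylvester identity.) Let A be an n×n matrix over R, let B, C be column n-vectors, D, E be row n-vectors, and f, g, h, i ∈ R. Assume A is invertible, the (n+1)×(n+1) block matrix N = [[A, B],[D, f]] is invertible, and f − D A⁻¹ B is invertible. Then i − (E, h) · N⁻¹ · (C, g)ᵀ = (i − E A⁻¹ C) − (h − E A⁻¹ B)·(f − D A⁻¹ B)⁻¹·(g − D A⁻¹ C). -/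
/-!
Block elimination. Put `x = N⁻¹ (C, g)`, so that `N x = (C, g)`. The top block row gives
`x₁ = A⁻¹ (C - B x₂)`; substituting this into the bottom row gives
`(f - D A⁻¹ B) x₂ = g - D A⁻¹ C`, so `x₂` is the inverse Schur complement applied to
`g - D A⁻¹ C`. Pairing `x` with `(E, h)` then gives the right-hand side.
-/

namespace Matrix

section BlockElimination

variable {m o R : Type*} [Fintype m] [Fintype o] [DecidableEq m] [Ring R]
  {A Ainv : Matrix m m R} {B : Matrix m o R} {C : Matrix o m R} {D : Matrix o o R}

theorem eq_mulVec_sub_of_mulVec_add_mulVec_eq (hA : Ainv * A = 1) {x u : m → R} {y : o → R}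
    (h : A *ᵥ x + B *ᵥ y = u) : x = Ainv *ᵥ (u - B *ᵥ y) := by
  rw [← h, add_sub_cancel_right, mulVec_mulVec, hA, one_mulVec]

theorem schurComplement_mulVec_eq (hA : Ainv * A = 1) {x u : m → R} {y v : o → R}
    (h₁ : A *ᵥ x + B *ᵥ y = u) (h₂ : C *ᵥ x + D *ᵥ y = v) :
    (D - C * Ainv * B) *ᵥ y = v - C *ᵥ Ainv *ᵥ u := by
  rw [← h₂, eq_mulVec_sub_of_mulVec_add_mulVec_eq hA h₁]
  simp only [sub_mulVec, ← mulVec_mulVec, mulVec_sub]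
  abel

theorem sumElim_dotProduct_mulVec_sumElim_of_fromBlocks_mul_eq_one [DecidableEq o]
    (hA : Ainv * A = 1) {Sinv : Matrix o o R} (hS : Sinv * (D - C * Ainv * B) = 1)
    {Ninv : Matrix (m ⊕ o) (m ⊕ o) R} (hN : fromBlocks A B C D * Ninv = 1)
    (u w : m → R) (v z : o → R) :
    Sum.elim w z ⬝ᵥ Ninv *ᵥ Sum.elim u v
      = w ⬝ᵥ Ainv *ᵥ u + (z - w ᵥ* Ainv ᵥ* B) ⬝ᵥ Sinv *ᵥ (v - C *ᵥ Ainv *ᵥ u) := by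
  set x := Ninv *ᵥ Sum.elim u v
  have hx : fromBlocks A B C D *ᵥ x = Sum.elim u v := by
    rw [mulVec_mulVec, hN, one_mulVec]
  obtain ⟨h₁, h₂⟩ := Sum.elim_eq_iff.mp ((fromBlocks_mulVec ..).symm.trans hx)
  have hy : x ∘ Sum.inr = Sinv *ᵥ (v - C *ᵥ Ainv *ᵥ u) := by
    rw [← schurComplement_mulVec_eq hA h₁ h₂, mulVec_mulVec, hS, one_mulVec]
  rw [← Sum.elim_comp_inl_inr x, sumElim_dotProduct_sumElim,
    eq_mulVec_sub_of_mulVec_add_mulVec_eq hA h₁, hy, mulVec_sub, dotProduct_sub, sub_dotProduct]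
  simp only [dotProduct_mulVec]
  abel

end BlockElimination

theorem dotProduct_mulVec_of_unique {ι R : Type*} [Unique ι] [NonUnitalSemiring R]
    (u v : ι → R) (M : Matrix ι ι R) :
    u ⬝ᵥ M *ᵥ v = u default * M default default * v default := by
  simp [dotProduct, mulVec, mul_assoc]

theorem replicateRow_mul_mul_replicateCol {n R : Type*} [Fintype n] [NonUnitalSemiring R]
    (ι : Type*) (v w : n → R) (M : Matrix n n R) :
    replicateRow ι v * M * replicateCol ι w = of fun _ _ => v ⬝ᵥ M *ᵥ w := by
  rw [← replicateRow_vecMul, replicateRow_mul_replicateCol, dotProduct_mulVec]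

end Matrix

open Matrix in
theorem stmt_9_general {R : Type*} [Ring R] (n : ℕ)
    (A : Matrix (Fin n) (Fin n) R) (B C : Fin n → R) (D E : Fin n → R)
    (f g h i : R)
    (Ainv : Matrix (Fin n) (Fin n) R) (hAr : Ainv * A = 1)
    (Ninv : Matrix (Fin n ⊕ Unit) (Fin n ⊕ Unit) R)
    (hNl : Matrix.fromBlocks A (Matrix.of fun p (_ : Unit) => B p)
        (Matrix.of fun (_ : Unit) p => D p) (Matrix.of fun (_ : Unit) (_ : Unit) => f)
      * Ninv = 1)
    (finv : R)
    (hfr : finv * (f - D ⬝ᵥ Ainv *ᵥ B) = 1) :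
    i - (Sum.elim E fun _ => h) ⬝ᵥ Ninv *ᵥ (Sum.elim C fun _ => g)
      = (i - E ⬝ᵥ Ainv *ᵥ C)
        - (h - E ⬝ᵥ Ainv *ᵥ B) * finv * (g - D ⬝ᵥ Ainv *ᵥ C) := by
  have hS : (of fun _ _ => finv : Matrix Unit Unit R)
      * (of (fun _ _ => f) - replicateRow Unit D * Ainv * replicateCol Unit B) = 1 := by
    rw [replicateRow_mul_mul_replicateCol]
    ext ⟨⟩ ⟨⟩
    simpa [mul_apply] using hfr
  rw [sumElim_dotProduct_mulVec_sumElim_of_fromBlocks_mul_eq_one hAr hS hNl,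
    mulVec_replicateCol_eq_const, replicateRow_mulVec_eq_const, ← dotProduct_mulVec,
    dotProduct_mulVec_of_unique]
  simp only [Pi.sub_apply, Function.const_apply, of_apply]
  noncomm_ring

open Matrix in
/-- The noncommutative Jacobi / Sylvester identity for quasideterminants. -/
theorem stmt_9 {R : Type*} [Ring R] (n : ℕ)
    (A : Matrix (Fin n) (Fin n) R) (B C : Fin n → R) (D E : Fin n → R)
    (f g h i : R)
    (Ainv : Matrix (Fin n) (Fin n) R) (hAl : A * Ainv = 1) (hAr : Ainv * A = 1)
    (Ninv : Matrix (Fin n ⊕ Unit) (Fin n ⊕ Unit) R)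
    (hNl : Matrix.fromBlocks A (Matrix.of fun p (_ : Unit) => B p)
        (Matrix.of fun (_ : Unit) p => D p) (Matrix.of fun (_ : Unit) (_ : Unit) => f)
      * Ninv = 1)
    (hNr : Ninv * Matrix.fromBlocks A (Matrix.of fun p (_ : Unit) => B p)
        (Matrix.of fun (_ : Unit) p => D p) (Matrix.of fun (_ : Unit) (_ : Unit) => f)
      = 1)
    (finv : R)
    (hfl : (f - D ⬝ᵥ Ainv *ᵥ B) * finv = 1)
    (hfr : finv * (f - D ⬝ᵥ Ainv *ᵥ B) = 1) :
    i - (Sum.elim E fun _ => h) ⬝ᵥ Ninv *ᵥ (Sum.elim C fun _ => g)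
      = (i - E ⬝ᵥ Ainv *ᵥ C)
        - (h - E ⬝ᵥ Ainv *ᵥ B) * finv * (g - D ⬝ᵥ Ainv *ᵥ C) :=
  stmt_9_general n A B C D E f g h i Ainv hAr Ninv hNl finv hfr
end

section
/- (Homological relation for quasideterminants.) Let A be an n×n matrix over R, let B, C be column n-vectors, D, E be row n-vectors, and f, g, h, i ∈ R. Assume the (n+1)×(n+1) block matrices N = [[A, B],[D, f]] and P = [[A, B],[E, h]] are both invertible. Then g − (D, f) · P⁻¹ · (C, i)ᵀ = ( −(D, f) · P⁻¹ · (0, 1)ᵀ ) · ( i − (E, h) · N⁻¹ · (C, g)ᵀ ), where (0,1)ᵀ denotes the column n+1-vector with 1 in the last position and 0 elsewhere. -/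
/-!
Write `d = N l`, `e = P l` and `y = e N⁻¹`. Since `N` and `P` differ only in row `l`,
`N = P + eₗ (d - e)`, so `x = d P⁻¹` satisfies `x N = d + xₗ (d - e)`. Multiplying by `N⁻¹` and
using `d N⁻¹ = eₗ` gives `x = eₗ + xₗ (eₗ - y)`. Pairing `x` with the two columns, which differ
only in entry `l`, turns this into the identity, with `-xₗ = -(d P⁻¹ eₗ)` as the factor.
-/

namespace Matrix

variable {ι R : Type*} [DecidableEq ι] [Ring R]

theorem eq_add_vecMulVec_of_rows_eq {N P : Matrix ι ι R} {l : ι} (hNP : ∀ k ≠ l, N k = P k) :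
    N = P + vecMulVec (Pi.single l 1) (N l - P l) := by
  ext k j
  by_cases hk : k = l
  · subst hk; simp [vecMulVec_apply]
  · simp [vecMulVec_apply, hk, hNP k hk]

variable [Fintype ι]

theorem row_vecMul_eq_single_of_mul_eq_one {N Ninv : Matrix ι ι R} (hN : N * Ninv = 1) (l : ι) :
    N l ᵥ* Ninv = Pi.single l 1 := by
  ext j
  rw [← mul_apply_eq_vecMul, hN, one_eq_pi_single]

theorem row_vecMul_leftInv_eq_of_rows_eq {N P Ninv Pinv : Matrix ι ι R} {l : ι}
    (hN : N * Ninv = 1) (hP : Pinv * P = 1) (hNP : ∀ k ≠ l, N k = P k) :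
    N l ᵥ* Pinv = Pi.single l 1 + (N l ᵥ* Pinv) l • (Pi.single l 1 - P l ᵥ* Ninv) := by
  set x := N l ᵥ* Pinv
  have hxP : x ᵥ* P = N l := by rw [vecMul_vecMul, hP, vecMul_one]
  have hxN : x ᵥ* N = N l + x l • (N l - P l) := by
    conv_lhs => rw [eq_add_vecMulVec_of_rows_eq hNP]
    rw [vecMul_add, hxP, vecMul_vecMulVec, dotProduct_single_one]
  calc x = x ᵥ* N ᵥ* Ninv := by rw [vecMul_vecMul, hN, vecMul_one]
    _ = _ := by rw [hxN, add_vecMul, smul_vecMul, sub_vecMul, row_vecMul_eq_single_of_mul_eq_one hN]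

theorem quasideterminant_homological {N P Ninv Pinv : Matrix ι ι R} {l : ι}
    (hN : N * Ninv = 1) (hP : Pinv * P = 1) (hNP : ∀ k ≠ l, N k = P k)
    {u v : ι → R} (huv : ∀ k ≠ l, u k = v k) :
    u l - N l ⬝ᵥ Pinv *ᵥ v = -(N l ⬝ᵥ Pinv *ᵥ Pi.single l 1) * (v l - P l ⬝ᵥ Ninv *ᵥ u) := by
  simp only [dotProduct_mulVec]
  set x := N l ᵥ* Pinv
  set y := P l ᵥ* Ninv
  have hx : x = Pi.single l 1 + x l • (Pi.single l 1 - y) :=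
    row_vecMul_leftInv_eq_of_rows_eq hN hP hNP
  have hxu : x ⬝ᵥ u = u l + x l * (u l - y ⬝ᵥ u) := by
    conv_lhs => rw [hx]
    simp only [add_dotProduct, smul_dotProduct, sub_dotProduct, single_one_dotProduct, smul_eq_mul]
  have hv : v = u + Pi.single l (v l - u l) := by
    ext k
    by_cases hk : k = l
    · subst hk; simp
    · simp [hk, huv k hk]
  rw [dotProduct_single_one, hv, dotProduct_add, dotProduct_single, hxu]
  simp only [Pi.add_apply, Pi.single_eq_same, add_sub_cancel]
  noncomm_ring

end Matrix

open Matrix in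
theorem stmt_10_general {R : Type*} [Ring R] (n : ℕ)
    (A : Matrix (Fin n) (Fin n) R) (B C : Fin n → R) (D E : Fin n → R)
    (f g h i : R)
    (Ninv : Matrix (Fin n ⊕ Unit) (Fin n ⊕ Unit) R)
    (hNl : Matrix.fromBlocks A (Matrix.of fun p (_ : Unit) => B p)
        (Matrix.of fun (_ : Unit) p => D p) (Matrix.of fun (_ : Unit) (_ : Unit) => f)
      * Ninv = 1)
    (Pinv : Matrix (Fin n ⊕ Unit) (Fin n ⊕ Unit) R)
    (hPr : Pinv * Matrix.fromBlocks A (Matrix.of fun p (_ : Unit) => B p)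
        (Matrix.of fun (_ : Unit) p => E p) (Matrix.of fun (_ : Unit) (_ : Unit) => h)
      = 1) :
    g - (Sum.elim D fun _ => f) ⬝ᵥ Pinv *ᵥ (Sum.elim C fun _ => i)
      = (-((Sum.elim D fun _ => f) ⬝ᵥ Pinv *ᵥ (Sum.elim (fun _ => 0) fun _ => (1 : R))))
        * (i - (Sum.elim E fun _ => h) ⬝ᵥ Ninv *ᵥ (Sum.elim C fun _ => g)) := by
  have hlast :
      (Sum.elim (fun _ => 0) fun _ => (1 : R)) = Pi.single (Sum.inr () : Fin n ⊕ Unit) 1 := by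
    ext (p | ⟨⟩) <;> simp
  rw [hlast]
  refine quasideterminant_homological (l := Sum.inr ()) (u := Sum.elim C fun _ => g)
    (v := Sum.elim C fun _ => i) hNl hPr ?_ ?_
  · rintro (p | ⟨⟩) hp
    · ext (q | ⟨⟩) <;> rfl
    · exact absurd rfl hp
  · rintro (p | ⟨⟩) hp
    · rfl
    · exact absurd rfl hp

open Matrix in
/-- The homological relation for quasideterminants. -/
theorem stmt_10 {R : Type*} [Ring R] (n : ℕ)
    (A : Matrix (Fin n) (Fin n) R) (B C : Fin n → R) (D E : Fin n → R)
    (f g h i : R)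
    (Ninv : Matrix (Fin n ⊕ Unit) (Fin n ⊕ Unit) R)
    (hNl : Matrix.fromBlocks A (Matrix.of fun p (_ : Unit) => B p)
        (Matrix.of fun (_ : Unit) p => D p) (Matrix.of fun (_ : Unit) (_ : Unit) => f)
      * Ninv = 1)
    (hNr : Ninv * Matrix.fromBlocks A (Matrix.of fun p (_ : Unit) => B p)
        (Matrix.of fun (_ : Unit) p => D p) (Matrix.of fun (_ : Unit) (_ : Unit) => f)
      = 1)
    (Pinv : Matrix (Fin n ⊕ Unit) (Fin n ⊕ Unit) R)
    (hPl : Matrix.fromBlocks A (Matrix.of fun p (_ : Unit) => B p)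
        (Matrix.of fun (_ : Unit) p => E p) (Matrix.of fun (_ : Unit) (_ : Unit) => h)
      * Pinv = 1)
    (hPr : Pinv * Matrix.fromBlocks A (Matrix.of fun p (_ : Unit) => B p)
        (Matrix.of fun (_ : Unit) p => E p) (Matrix.of fun (_ : Unit) (_ : Unit) => h)
      = 1) :
    g - (Sum.elim D fun _ => f) ⬝ᵥ Pinv *ᵥ (Sum.elim C fun _ => i)
      = (-((Sum.elim D fun _ => f) ⬝ᵥ Pinv *ᵥ (Sum.elim (fun _ => 0) fun _ => (1 : R))))
        * (i - (Sum.elim E fun _ => h) ⬝ᵥ Ninv *ᵥ (Sum.elim C fun _ => g)) :=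
  stmt_10_general n A B C D E f g h i Ninv hNl Pinv hPr
end

section
/- (Quasi-Plücker coordinates are independent of the column index.) Let A_I be an (n−1)×n matrix over R and let a, b be row n-vectors over R. For a column index s, let M_s denote the (n−1)×(n−1) matrix obtained from A_I by deleting its s-th column, and define the quasideterminants p_s(a) = a_s − (a with s-th entry deleted)·M_s⁻¹·(s-th column of A_I), and p_s(b) analogously. Let B denote the n×n matrix obtained by stacking A_I on top of the row b, and let e be the column n-vector with 1 in the last position and 0 elsewhere. If B is invertible and, for two column indices s and s', the matrices M_s, M_{s'} are invertible and p_s(b), p_{s'}(b) are invertible in R, then p_s(a)·p_s(b)⁻¹ = p_{s'}(a)·p_{s'}(b)⁻¹ = a · B⁻¹ · e. -/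
/-!
Let `c := B⁻¹ e` be the last column of `B⁻¹`, so that `A c = 0` and `b · c = 1`.
Solving `A c = 0` for the entries of `c` off the column `s` through `M_s⁻¹` gives
`v · c = p_s(v) c_s` for every row `v`. For `v = b` this says that `c_s` is the inverse
of `p_s(b)`, and then for `v = a` that `p_s(a) p_s(b)⁻¹ = a · c`, whatever `s` is.
-/

/-- The quasi-Plücker coordinate of the row `v` relative to the `n × (n+1)`
matrix `A`, built from the column index `s` using a given inverse `Minv` of
the square matrix obtained from `A` by deleting its `s`-th column. -/
def pcoord {R : Type*} [Ring R] {n : ℕ} (A : Matrix (Fin n) (Fin (n + 1)) R)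
    (Minv : Matrix (Fin n) (Fin n) R) (v : Fin (n + 1) → R) (s : Fin (n + 1)) : R :=
  v s - ∑ j : Fin n, ∑ i : Fin n, v (s.succAbove j) * Minv j i * A i s

open Matrix

section

variable {R : Type*} [Ring R] {n : ℕ}

lemma mulVec_succAbove_eq_neg {A : Matrix (Fin n) (Fin (n + 1)) R} {c : Fin (n + 1) → R}
    (hAc : A *ᵥ c = 0) (s : Fin (n + 1)) :
    A.submatrix id s.succAbove *ᵥ (c ∘ s.succAbove) = -fun i => A i s * c s := by
  funext i
  have h := congrFun hAc i
  rw [mulVec, dotProduct, Fin.sum_univ_succAbove _ s] at h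
  exact eq_neg_of_add_eq_zero_right h

lemma dotProduct_eq_pcoord_mul {A : Matrix (Fin n) (Fin (n + 1)) R} {c : Fin (n + 1) → R}
    (hAc : A *ᵥ c = 0) {s : Fin (n + 1)} {Minv : Matrix (Fin n) (Fin n) R}
    (hM : Minv * A.submatrix id s.succAbove = 1) (v : Fin (n + 1) → R) :
    v ⬝ᵥ c = pcoord A Minv v s * c s := by
  have hc : ∀ j, c (s.succAbove j) = -∑ i, Minv j i * (A i s * c s) := by
    intro j
    have h := congrFun (congrArg (Minv *ᵥ ·) (mulVec_succAbove_eq_neg hAc s)) j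
    rwa [mulVec_mulVec, hM, one_mulVec, mulVec_neg] at h
  rw [dotProduct, Fin.sum_univ_succAbove _ s, pcoord, sub_mul, Finset.sum_mul]
  simp only [hc, Finset.mul_sum, Finset.sum_mul, mul_neg, mul_assoc, Finset.sum_neg_distrib,
    sub_eq_add_neg]

lemma pcoord_mul_eq_dotProduct {A : Matrix (Fin n) (Fin (n + 1)) R} {b c : Fin (n + 1) → R}
    (hAc : A *ᵥ c = 0) (hbc : b ⬝ᵥ c = 1) {s : Fin (n + 1)} {Minv : Matrix (Fin n) (Fin n) R}
    (hM : Minv * A.submatrix id s.succAbove = 1) {u : R} (hu : u * pcoord A Minv b s = 1)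
    (a : Fin (n + 1) → R) :
    pcoord A Minv a s * u = a ⬝ᵥ c := by
  have hcs : c s = u := by
    have hbs : pcoord A Minv b s * c s = 1 := hbc ▸ (dotProduct_eq_pcoord_mul hAc hM b).symm
    exact (left_inv_eq_right_inv hu hbs).symm
  rw [dotProduct_eq_pcoord_mul hAc hM a, hcs]

lemma mulVec_eq_zero_and_dotProduct_eq_one_of_mulVec_eq_single
    {A : Matrix (Fin n) (Fin (n + 1)) R} {b c : Fin (n + 1) → R}
    {B : Matrix (Fin (n + 1)) (Fin (n + 1)) R}
    (hB : ∀ p q, B p q = Fin.lastCases (b q) (fun i => A i q) p)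
    (hBc : B *ᵥ c = fun p => if p = Fin.last n then (1 : R) else 0) :
    A *ᵥ c = 0 ∧ b ⬝ᵥ c = 1 := by
  constructor
  · funext i
    simpa [mulVec, dotProduct, hB, (Fin.castSucc_lt_last i).ne] using congrFun hBc i.castSucc
  · simpa [mulVec, dotProduct, hB] using congrFun hBc (Fin.last n)

end

theorem stmt_11_general {R : Type*} [Ring R] (n : ℕ)
    (A : Matrix (Fin n) (Fin (n + 1)) R) (a b : Fin (n + 1) → R)
    (B : Matrix (Fin (n + 1)) (Fin (n + 1)) R)
    (hB : ∀ (p q : Fin (n + 1)), B p q = Fin.lastCases (b q) (fun i => A i q) p)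
    (Binv : Matrix (Fin (n + 1)) (Fin (n + 1)) R)
    (hBl : B * Binv = 1)
    (s s' : Fin (n + 1))
    (Msinv Ms'inv : Matrix (Fin n) (Fin n) R)
    (hMsr : Msinv * A.submatrix id s.succAbove = 1)
    (hMs'r : Ms'inv * A.submatrix id s'.succAbove = 1)
    (u u' : R)
    (hur : u * pcoord A Msinv b s = 1)
    (hu'r : u' * pcoord A Ms'inv b s' = 1) :
    pcoord A Msinv a s * u = pcoord A Ms'inv a s' * u'
      ∧ pcoord A Msinv a s * u
        = dotProduct a
            (Binv.mulVec fun p => if p = Fin.last n then (1 : R) else 0) := by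
  obtain ⟨hAc, hbc⟩ :=
    mulVec_eq_zero_and_dotProduct_eq_one_of_mulVec_eq_single (c := Binv *ᵥ _) hB
      (by rw [mulVec_mulVec, hBl, one_mulVec])
  have hs := pcoord_mul_eq_dotProduct hAc hbc hMsr hur a
  have hs' := pcoord_mul_eq_dotProduct hAc hbc hMs'r hu'r a
  exact ⟨hs.trans hs'.symm, hs⟩

/-- Quasi-Plücker coordinates are independent of the choice of the column
index: `p_s(a)·p_s(b)⁻¹ = p_{s'}(a)·p_{s'}(b)⁻¹ = a·B⁻¹·e`. -/
theorem stmt_11 {R : Type*} [Ring R] (n : ℕ)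
    (A : Matrix (Fin n) (Fin (n + 1)) R) (a b : Fin (n + 1) → R)
    (B : Matrix (Fin (n + 1)) (Fin (n + 1)) R)
    (hB : ∀ (p q : Fin (n + 1)), B p q = Fin.lastCases (b q) (fun i => A i q) p)
    (Binv : Matrix (Fin (n + 1)) (Fin (n + 1)) R)
    (hBl : B * Binv = 1) (hBr : Binv * B = 1)
    (s s' : Fin (n + 1))
    (Msinv Ms'inv : Matrix (Fin n) (Fin n) R)
    (hMsl : A.submatrix id s.succAbove * Msinv = 1)
    (hMsr : Msinv * A.submatrix id s.succAbove = 1)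
    (hMs'l : A.submatrix id s'.succAbove * Ms'inv = 1)
    (hMs'r : Ms'inv * A.submatrix id s'.succAbove = 1)
    (u u' : R)
    (hul : pcoord A Msinv b s * u = 1) (hur : u * pcoord A Msinv b s = 1)
    (hu'l : pcoord A Ms'inv b s' * u' = 1) (hu'r : u' * pcoord A Ms'inv b s' = 1) :
    pcoord A Msinv a s * u = pcoord A Ms'inv a s' * u'
      ∧ pcoord A Msinv a s * u
        = dotProduct a
            (Binv.mulVec fun p => if p = Fin.last n then (1 : R) else 0) :=
  stmt_11_general n A a b B hB Binv hBl s s' Msinv Ms'inv hMsr hMs'r u u' hur hu'r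
end

section
/- Let K be a field, let M be an n×n matrix over K with n ≥ 2, fix indices i, j, and suppose the (n−1)×(n−1) submatrix M^{i,j} obtained by deleting row i and column j has nonzero determinant. Then the quasideterminant of M about the (i,j) entry satisfies m_{i,j} − r_i^j · (M^{i,j})⁻¹ · c_j^i = (−1)^{i+j} · det(M) / det(M^{i,j}), where r_i^j is row i of M with the j-th entry deleted and c_j^i is column j of M with the i-th entry deleted (and i, j are counted from 1). -/
/-!
Reordering rows and columns so that row `i` and column `j` come last multiplies the determinant
by `(-1)^(i+j)`: on each side this is the cycle `Fin.cycleRange`, of sign `(-1)^i`, resp.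
`(-1)^j`. The reordered matrix is the block matrix `[[M^{i,j}, c_j^i], [r_i^j, m_{i,j}]]`, and
the Schur complement of its invertible block `M^{i,j}` is exactly the quasideterminant, so
`det M^{i,j} * |M|_{i,j} = (-1)^(i+j) * det M`.
-/

open Matrix Equiv

namespace Fin

variable {n : ℕ}

def succAboveSumEquiv (i : Fin (n + 1)) : Fin n ⊕ Unit ≃ Fin (n + 1) :=
  (optionEquivSumPUnit (Fin n)).symm.trans (finSuccEquiv' i).symm

@[simp]
theorem succAboveSumEquiv_inl (i : Fin (n + 1)) (p : Fin n) :
    succAboveSumEquiv i (Sum.inl p) = i.succAbove p :=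
  rfl

@[simp]
theorem succAboveSumEquiv_inr (i : Fin (n + 1)) (u : Unit) : succAboveSumEquiv i (Sum.inr u) = i :=
  rfl

theorem succAboveSumEquiv_eq_trans_cycleRange_symm (i : Fin (n + 1)) :
    succAboveSumEquiv i = (succAboveSumEquiv 0).trans i.cycleRange.symm := by
  ext (p | u) <;> simp [cycleRange_symm_zero, cycleRange_symm_succ]

end Fin

namespace Matrix

variable {R : Type*} [CommRing R]

theorem det_fromBlocks₁₁_of_unique {ι u : Type*} [Fintype ι] [DecidableEq ι] [Unique u]
    (A : Matrix ι ι R) (c : Matrix ι u R) (r : Matrix u ι R) (d : Matrix u u R)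
    (hA : IsUnit A.det) :
    (fromBlocks A c r d).det =
      A.det * (d default default - ∑ p, ∑ q, r default p * A⁻¹ p q * c q default) := by
  have := A.invertibleOfIsUnitDet hA
  rw [det_fromBlocks₁₁, invOf_eq_nonsing_inv, det_unique (d - _)]
  simp only [sub_apply, mul_apply, Finset.sum_mul]
  rw [Finset.sum_comm]

variable {n : ℕ}

/-- The quasideterminant `|M|_{i,j}`, with rows and columns indexed from `0`. -/
noncomputable def quasidet (M : Matrix (Fin (n + 1)) (Fin (n + 1)) R) (i j : Fin (n + 1)) : R :=
  M i j - ∑ p, ∑ q,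
    M i (j.succAbove p) * (M.submatrix i.succAbove j.succAbove)⁻¹ p q * M (i.succAbove q) j

theorem submatrix_succAboveSumEquiv {α : Type*} (M : Matrix (Fin (n + 1)) (Fin (n + 1)) α)
    (i j : Fin (n + 1)) :
    M.submatrix i.succAboveSumEquiv j.succAboveSumEquiv =
      fromBlocks (M.submatrix i.succAbove j.succAbove) (of fun p _ => M (i.succAbove p) j)
        (of fun _ q => M i (j.succAbove q)) (of fun _ _ => M i j) := by
  ext (p | p) (q | q) <;> rfl

theorem det_submatrix_succAboveSumEquiv (M : Matrix (Fin (n + 1)) (Fin (n + 1)) R)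
    (i j : Fin (n + 1)) :
    (M.submatrix i.succAboveSumEquiv j.succAboveSumEquiv).det =
      (-1) ^ ((i : ℕ) + (j : ℕ)) * M.det := by
  have hperm : M.submatrix i.cycleRange.symm j.cycleRange.symm =
      (M.submatrix (i.cycleRange.symm : Perm _) id).submatrix id (j.cycleRange.symm : Perm _) :=
    rfl
  rw [Fin.succAboveSumEquiv_eq_trans_cycleRange_symm i,
    Fin.succAboveSumEquiv_eq_trans_cycleRange_symm j, coe_trans, coe_trans,
    ← submatrix_submatrix, det_submatrix_equiv_self, hperm, det_permute', det_permute,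
    Perm.sign_symm, Perm.sign_symm, Fin.sign_cycleRange, Fin.sign_cycleRange]
  push_cast
  ring

theorem det_mul_quasidet (M : Matrix (Fin (n + 1)) (Fin (n + 1)) R) (i j : Fin (n + 1))
    (h : IsUnit (M.submatrix i.succAbove j.succAbove).det) :
    (M.submatrix i.succAbove j.succAbove).det * M.quasidet i j =
      (-1) ^ ((i : ℕ) + (j : ℕ)) * M.det := by
  rw [← det_submatrix_succAboveSumEquiv, submatrix_succAboveSumEquiv,
    det_fromBlocks₁₁_of_unique _ _ _ _ h]
  rfl

end Matrix

theorem stmt_12_general {K : Type*} [Field K] (n : ℕ)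
    (M : Matrix (Fin (n + 1)) (Fin (n + 1)) K) (i j : Fin (n + 1))
    (hdet : (M.submatrix i.succAbove j.succAbove).det ≠ 0) :
    M i j - ∑ p : Fin n, ∑ q : Fin n,
        M i (j.succAbove p) * (M.submatrix i.succAbove j.succAbove)⁻¹ p q
          * M (i.succAbove q) j
      = (-1 : K) ^ ((i : ℕ) + (j : ℕ)) * M.det
          / (M.submatrix i.succAbove j.succAbove).det := by
  rw [eq_div_iff hdet, ← M.det_mul_quasidet i j hdet.isUnit, mul_comm]
  rfl

/-- Over a field, the quasideterminant about the `(i,j)` entry is the signed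
ratio of determinants `(-1)^(i+j) det M / det M^{i,j}`.  (Here rows and columns
are indexed from `0`; the sign `(-1)^(i+j)` agrees with the `1`-based one.) -/
theorem stmt_12 {K : Type*} [Field K] (n : ℕ) (hn : 1 ≤ n)
    (M : Matrix (Fin (n + 1)) (Fin (n + 1)) K) (i j : Fin (n + 1))
    (hdet : (M.submatrix i.succAbove j.succAbove).det ≠ 0) :
    M i j - ∑ p : Fin n, ∑ q : Fin n,
        M i (j.succAbove p) * (M.submatrix i.succAbove j.succAbove)⁻¹ p q
          * M (i.succAbove q) j
      = (-1 : K) ^ ((i : ℕ) + (j : ℕ)) * M.det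
          / (M.submatrix i.succAbove j.succAbove).det :=
  stmt_12_general n M i j hdet
end

section
/- (Darboux transformation for the non-Abelian Hirota–Miwa Lax pair.) Let φ, θ : ℤ³ → R and U_{ij} : ℤ³ → R (for distinct i, j ∈ {1,2,3}), let a₁, a₂, a₃ be nonzero real scalars, and let T_i denote the shift by 1 in the i-th discrete variable. Assume that for all distinct i, j and at every lattice point: a_i⁻¹·T_i(φ) − a_j⁻¹·T_j(φ) = U_{ij}·φ and a_i⁻¹·T_i(θ) − a_j⁻¹·T_j(θ) = U_{ij}·θ, and that every value of θ is invertible in R. Define φ̃^{(i)} = a_i⁻¹·( T_i(φ) − T_i(θ)·θ⁻¹·φ ) and Ũ_{ij} = T_j( T_i(θ)·θ⁻¹ )·U_{ij}·θ·T_i(θ)⁻¹. Then φ̃^{(1)} = φ̃^{(2)} = φ̃^{(3)} =: φ̃ at every lattice point, and φ̃ satisfies the transformed Lax pair a_i⁻¹·T_i(φ̃) − a_j⁻¹·T_j(φ̃) = Ũ_{ij}·φ̃ for all distinct i, j. -/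
/-!
Write `ψ = θ⁻¹ φ`. Subtracting the Lax equation for `θ`, multiplied on the right by `ψ`, from the
Lax equation for `φ` gives `a_i⁻¹ (T_i φ - T_i θ ψ) = a_j⁻¹ (T_j φ - T_j θ ψ)`, i.e. the
candidates `φ̃^{(i)}` agree. For the transformed Lax equation, compute `T_i φ̃` through `φ̃^{(j)}`
and `T_j φ̃` through `φ̃^{(i)}`: since the shifts commute, both contain the same `T_i T_j φ`, which
cancels, and what is left is matched with `Ũ_{ij} φ̃` by the Lax equations once more.
-/

namespace HirotaMiwa

variable {k R Λ ι : Type*} [CommRing k] [Ring R] [Algebra k R]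

section Pointwise

variable {bi bj : k} {u F Fi Fj G Gi Gj : R}

theorem darboux_smul_eq_smul {G' : R} (hG : G * G' = 1)
    (hF : bi • Fi - bj • Fj = u * F) (hG_lax : bi • Gi - bj • Gj = u * G) :
    bi • (Fi - Gi * G' * F) = bj • (Fj - Gj * G' * F) := by
  have hψ : u * F = u * G * (G' * F) := by
    rw [mul_assoc, ← mul_assoc G, hG, one_mul]
  rw [← sub_eq_zero]
  calc bi • (Fi - Gi * G' * F) - bj • (Fj - Gj * G' * F)
      = (bi • Fi - bj • Fj) - (bi • Gi - bj • Gj) * (G' * F) := by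
        simp only [smul_sub, sub_mul, smul_mul_assoc, mul_assoc]; abel
    _ = 0 := by rw [hF, hG_lax, ← hψ, sub_self]

theorem mul_darboux_eq_smul {Gi' : R} (hGi : Gi * Gi' = 1)
    (hF : bi • Fi - bj • Fj = u * F) (hG_lax : bi • Gi - bj • Gj = u * G) :
    u * (G * Gi' * Fi - F) = bj • (Fj - Gj * Gi' * Fi) := by
  calc u * (G * Gi' * Fi - F)
      = (bi • Gi - bj • Gj) * (Gi' * Fi) - (bi • Fi - bj • Fj) := by
        rw [hF, hG_lax, mul_sub, mul_assoc, mul_assoc]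
    _ = bj • (Fj - Gj * Gi' * Fi) := by
        rw [sub_mul, smul_mul_assoc, smul_mul_assoc, ← mul_assoc Gi, hGi, one_mul, smul_sub,
          mul_assoc]
        abel

end Pointwise

variable (b : ι → k) (T : ι → Λ → Λ)

def IsLaxSolution (U : ι → ι → Λ → R) (ψ : Λ → R) : Prop :=
  ∀ i j, i ≠ j → ∀ p, b i • ψ (T i p) - b j • ψ (T j p) = U i j p * ψ p

noncomputable def darboux (θ φ : Λ → R) (i : ι) (p : Λ) : R :=
  b i • (φ (T i p) - θ (T i p) * Ring.inverse (θ p) * φ p)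

noncomputable def darbouxPotential (U : ι → ι → Λ → R) (θ : Λ → R) (i j : ι) (p : Λ) : R :=
  θ (T j (T i p)) * Ring.inverse (θ (T j p)) * U i j p * (θ p * Ring.inverse (θ (T i p)))

variable {b T} {U : ι → ι → Λ → R} {θ φ : Λ → R}

theorem darboux_eq (hφ : IsLaxSolution b T U φ) (hθ : IsLaxSolution b T U θ)
    (hθ_unit : ∀ p, IsUnit (θ p)) (i j : ι) (p : Λ) :
    darboux b T θ φ i p = darboux b T θ φ j p := by
  obtain rfl | hij := eq_or_ne i j
  · rfl
  exact darboux_smul_eq_smul (Ring.mul_inverse_cancel _ (hθ_unit p)) (hφ i j hij p)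
    (hθ i j hij p)

theorem smul_darboux_sub_smul_darboux (hT : ∀ i j p, T i (T j p) = T j (T i p))
    (hθ_unit : ∀ p, IsUnit (θ p)) (i j : ι) (p : Λ) :
    b i • darboux b T θ φ j (T i p) - b j • darboux b T θ φ i (T j p)
      = b i • (θ (T j (T i p)) * Ring.inverse (θ (T j p))
          * (b j • (φ (T j p) - θ (T j p) * Ring.inverse (θ (T i p)) * φ (T i p)))) := by
  have hcancel : θ (T j (T i p)) * Ring.inverse (θ (T j p))
      * (θ (T j p) * Ring.inverse (θ (T i p)) * φ (T i p))
      = θ (T j (T i p)) * Ring.inverse (θ (T i p)) * φ (T i p) := by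
    simp only [← mul_assoc, mul_assoc _ (Ring.inverse (θ (T j p))),
      Ring.inverse_mul_cancel _ (hθ_unit _), mul_one]
  rw [darboux, darboux, hT i j p, mul_smul_comm, mul_sub, hcancel, smul_comm (b j) (b i)]
  simp only [smul_sub]
  abel

theorem darbouxPotential_mul_darboux (hθ_unit : ∀ p, IsUnit (θ p)) (i j : ι) (p : Λ) :
    darbouxPotential T U θ i j p * darboux b T θ φ i p
      = b i • (θ (T j (T i p)) * Ring.inverse (θ (T j p))
          * (U i j p * (θ p * Ring.inverse (θ (T i p)) * φ (T i p) - φ p))) := by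
  have hcancel : θ p * Ring.inverse (θ (T i p)) * (θ (T i p) * Ring.inverse (θ p) * φ p) = φ p := by
    simp only [← mul_assoc, mul_assoc _ (Ring.inverse (θ (T i p))),
      Ring.inverse_mul_cancel _ (hθ_unit _), Ring.mul_inverse_cancel _ (hθ_unit _), one_mul]
  rw [darbouxPotential, darboux, mul_smul_comm, mul_assoc _ (θ p * _), mul_sub (θ p * _), hcancel]
  simp only [mul_assoc]

theorem isLaxSolution_darboux (hT : ∀ i j p, T i (T j p) = T j (T i p))
    (hφ : IsLaxSolution b T U φ) (hθ : IsLaxSolution b T U θ)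
    (hθ_unit : ∀ p, IsUnit (θ p)) (l : ι) :
    IsLaxSolution b T (darbouxPotential T U θ) (darboux b T θ φ l) := by
  intro i j hij p
  rw [darboux_eq hφ hθ hθ_unit l j, darboux_eq hφ hθ hθ_unit l i (T j p),
    darboux_eq hφ hθ hθ_unit l i p, smul_darboux_sub_smul_darboux hT hθ_unit,
    darbouxPotential_mul_darboux hθ_unit,
    mul_darboux_eq_smul (Ring.mul_inverse_cancel _ (hθ_unit _)) (hφ i j hij p) (hθ i j hij p)]

end HirotaMiwa

open HirotaMiwa in
theorem stmt_17_general {R : Type*} [Ring R] [Algebra ℝ R]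
    (a : Fin 3 → ℝ)
    (φ θ : (Fin 3 → ℤ) → R) (U : Fin 3 → Fin 3 → (Fin 3 → ℤ) → R)
    (shift : Fin 3 → (Fin 3 → ℤ) → (Fin 3 → ℤ))
    (hshift : ∀ (i : Fin 3) (p : Fin 3 → ℤ), shift i p = Function.update p i (p i + 1))
    (hφ : ∀ i j : Fin 3, i ≠ j → ∀ p : Fin 3 → ℤ,
      (a i)⁻¹ • φ (shift i p) - (a j)⁻¹ • φ (shift j p) = U i j p * φ p)
    (hθ : ∀ i j : Fin 3, i ≠ j → ∀ p : Fin 3 → ℤ,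
      (a i)⁻¹ • θ (shift i p) - (a j)⁻¹ • θ (shift j p) = U i j p * θ p)
    (hθinv : ∀ p : Fin 3 → ℤ, IsUnit (θ p))
    (φt : Fin 3 → (Fin 3 → ℤ) → R)
    (hφt : ∀ (i : Fin 3) (p : Fin 3 → ℤ),
      φt i p = (a i)⁻¹ • (φ (shift i p) - θ (shift i p) * Ring.inverse (θ p) * φ p))
    (Ut : Fin 3 → Fin 3 → (Fin 3 → ℤ) → R)
    (hUt : ∀ (i j : Fin 3) (p : Fin 3 → ℤ),
      Ut i j p = θ (shift j (shift i p)) * Ring.inverse (θ (shift j p)) * U i j p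
        * (θ p * Ring.inverse (θ (shift i p)))) :
    (∀ (i j : Fin 3) (p : Fin 3 → ℤ), φt i p = φt j p)
      ∧ ∀ i j : Fin 3, i ≠ j → ∀ p : Fin 3 → ℤ,
        (a i)⁻¹ • φt 0 (shift i p) - (a j)⁻¹ • φt 0 (shift j p)
          = Ut i j p * φt 0 p := by
  have hφt' : φt = darboux (fun i => (a i)⁻¹) shift θ φ := funext₂ hφt
  have hUt' : Ut = darbouxPotential shift U θ := funext fun i => funext₂ (hUt i)
  have hcomm : ∀ i j p, shift i (shift j p) = shift j (shift i p) := by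
    intro i j p
    obtain rfl | hij := eq_or_ne i j
    · rfl
    simp only [hshift, Function.update_of_ne hij, Function.update_of_ne hij.symm,
      Function.update_comm hij]
  subst hφt' hUt'
  exact ⟨darboux_eq hφ hθ hθinv, isLaxSolution_darboux hcomm hφ hθ hθinv 0⟩

/-- Darboux transformation for the non-Abelian Hirota–Miwa Lax pair:
the three expressions `φ̃^{(i)}` coincide and the common value satisfies the
Lax pair with the transformed potentials `Ũ_{ij}`. -/
theorem stmt_17 {R : Type*} [Ring R] [Algebra ℝ R]
    (a : Fin 3 → ℝ) (ha : ∀ i, a i ≠ 0)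
    (φ θ : (Fin 3 → ℤ) → R) (U : Fin 3 → Fin 3 → (Fin 3 → ℤ) → R)
    (shift : Fin 3 → (Fin 3 → ℤ) → (Fin 3 → ℤ))
    (hshift : ∀ (i : Fin 3) (p : Fin 3 → ℤ), shift i p = Function.update p i (p i + 1))
    (hφ : ∀ i j : Fin 3, i ≠ j → ∀ p : Fin 3 → ℤ,
      (a i)⁻¹ • φ (shift i p) - (a j)⁻¹ • φ (shift j p) = U i j p * φ p)
    (hθ : ∀ i j : Fin 3, i ≠ j → ∀ p : Fin 3 → ℤ,
      (a i)⁻¹ • θ (shift i p) - (a j)⁻¹ • θ (shift j p) = U i j p * θ p)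
    (hθinv : ∀ p : Fin 3 → ℤ, IsUnit (θ p))
    (φt : Fin 3 → (Fin 3 → ℤ) → R)
    (hφt : ∀ (i : Fin 3) (p : Fin 3 → ℤ),
      φt i p = (a i)⁻¹ • (φ (shift i p) - θ (shift i p) * Ring.inverse (θ p) * φ p))
    (Ut : Fin 3 → Fin 3 → (Fin 3 → ℤ) → R)
    (hUt : ∀ (i j : Fin 3) (p : Fin 3 → ℤ),
      Ut i j p = θ (shift j (shift i p)) * Ring.inverse (θ (shift j p)) * U i j p
        * (θ p * Ring.inverse (θ (shift i p)))) :
    (∀ (i j : Fin 3) (p : Fin 3 → ℤ), φt i p = φt j p)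
      ∧ ∀ i j : Fin 3, i ≠ j → ∀ p : Fin 3 → ℤ,
        (a i)⁻¹ • φt 0 (shift i p) - (a j)⁻¹ • φt 0 (shift j p)
          = Ut i j p * φt 0 p :=
  stmt_17_general a φ θ U shift hshift hφ hθ hθinv φt hφt Ut hUt
end

section
/- Let τ_n : ℝ² → ℝ (n ∈ ℤ) be nowhere-vanishing functions satisfying the bilinear q-2DTL equation (δ_{q^α,x}δ_{q^β,y}τ_n)(x,y)·τ_n(x,y) − (δ_{q^α,x}τ_n)(x,y)·(δ_{q^β,y}τ_n)(x,y) = τ_{n+1}(x, q^β y)·τ_{n−1}(q^α x, y) − τ_n(q^α x, q^β y)·τ_n(x,y) for all n ∈ ℤ and all x ≠ 0, y ≠ 0. Then X_n := τ_n / τ_{n−1} satisfies the (scalar) noncommutative q-2DTL equation δ_{q^β,y}( (δ_{q^α,x}X_n)·X_n⁻¹ ) = X_{n+1}(x, q^β y)·X_n(x,y)⁻¹ − X_n(q^α x, q^β y)·X_{n−1}(q^α x, y)⁻¹ for all n ∈ ℤ and all x ≠ 0, y ≠ 0. -/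
/-!
Both sides of the equation are second q-differences, hence reduce to cross ratios of the four
shifted values over `K = (1 - q)² x y`: the bilinear equation says
`τ τ(qx,qy) - τ(qx,y) τ(x,qy) = K (τ_{n+1}(x,qy) τ_{n-1}(qx,y) - τ(qx,qy) τ)`, and the left side of
the noncommutative equation is `(X(qx,qy) / X(x,qy) - X(qx,y) / X(x,y)) / K`.
Solving the bilinear equations at `n` and `n - 1` for `τ_{n+1}(x,qy)` and `τ_{n-2}(qx,y)` and
substituting into the right side, the `K`-free terms cancel and what remains is that cross ratio.
-/

/-- The q-difference operator in `x` on real-valued functions. -/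
noncomputable def rqdX (q α : ℝ) (f : ℝ → ℝ → ℝ) (x y : ℝ) : ℝ :=
  (f x y - f (q ^ α * x) y) / ((1 - q) * x)

/-- The q-difference operator in `y` on real-valued functions. -/
noncomputable def rqdY (q β : ℝ) (f : ℝ → ℝ → ℝ) (x y : ℝ) : ℝ :=
  (f x y - f x (q ^ β * y)) / ((1 - q) * y)

section QDifference

variable {q : ℝ} (α β : ℝ)

lemma rqdX_rqdY_mul_sub_rqdX_mul_rqdY (hq : q ≠ 1) (f : ℝ → ℝ → ℝ) {x y : ℝ}
    (hx : x ≠ 0) (hy : y ≠ 0) :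
    rqdX q α (fun u v => rqdY q β f u v) x y * f x y - rqdX q α f x y * rqdY q β f x y
      = (f x y * f (q ^ α * x) (q ^ β * y) - f (q ^ α * x) y * f x (q ^ β * y))
          / ((1 - q) * x * ((1 - q) * y)) := by
  have hq' : (1 : ℝ) - q ≠ 0 := sub_ne_zero_of_ne hq.symm
  simp only [rqdX, rqdY]
  field_simp
  ring

lemma rqdY_rqdX_mul_inv (hq : q ≠ 1) (f : ℝ → ℝ → ℝ) {x y : ℝ} (hx : x ≠ 0) (hy : y ≠ 0)
    (hf : f x y ≠ 0) (hf' : f x (q ^ β * y) ≠ 0) :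
    rqdY q β (fun u v => rqdX q α f u v * (f u v)⁻¹) x y
      = (f (q ^ α * x) (q ^ β * y) / f x (q ^ β * y) - f (q ^ α * x) y / f x y)
          / ((1 - q) * x * ((1 - q) * y)) := by
  have hq' : (1 : ℝ) - q ≠ 0 := sub_ne_zero_of_ne hq.symm
  simp only [rqdX, rqdY]
  field_simp
  ring

end QDifference

theorem stmt_18_general (q α β : ℝ) (hq1 : q ≠ 1)
    (τ : ℤ → ℝ → ℝ → ℝ)
    (hτ0 : ∀ (n : ℤ) (x y : ℝ), τ n x y ≠ 0)
    (hbil : ∀ (n : ℤ) (x y : ℝ), x ≠ 0 → y ≠ 0 →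
      rqdX q α (fun u v => rqdY q β (τ n) u v) x y * τ n x y
          - rqdX q α (τ n) x y * rqdY q β (τ n) x y
        = τ (n + 1) x (q ^ β * y) * τ (n - 1) (q ^ α * x) y
          - τ n (q ^ α * x) (q ^ β * y) * τ n x y)
    (X : ℤ → ℝ → ℝ → ℝ)
    (hX : ∀ (n : ℤ) (x y : ℝ), X n x y = τ n x y / τ (n - 1) x y) :
    ∀ (n : ℤ) (x y : ℝ), x ≠ 0 → y ≠ 0 →
      rqdY q β (fun u v => rqdX q α (X n) u v * (X n u v)⁻¹) x y
        = X (n + 1) x (q ^ β * y) * (X n x y)⁻¹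
          - X n (q ^ α * x) (q ^ β * y) * (X (n - 1) (q ^ α * x) y)⁻¹ := by
  intro n x y hx hy
  have hX0 : ∀ m u v, X m u v ≠ 0 := fun m u v => by
    rw [hX]; exact div_ne_zero (hτ0 m u v) (hτ0 (m - 1) u v)
  set K := (1 - q) * x * ((1 - q) * y)
  have hK : K ≠ 0 := by
    have : (1 : ℝ) - q ≠ 0 := sub_ne_zero_of_ne hq1.symm
    positivity
  have hn := hbil n x y hx hy
  have hn1 := hbil (n - 1) x y hx hy
  rw [rqdX_rqdY_mul_sub_rqdX_mul_rqdY α β hq1 _ hx hy, div_eq_iff hK] at hn hn1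
  rw [sub_add_cancel] at hn1
  rw [rqdY_rqdX_mul_inv α β hq1 _ hx hy (hX0 _ _ _) (hX0 _ _ _)]
  simp only [hX, add_sub_cancel_right]
  set x' := q ^ α * x
  set y' := q ^ β * y
  -- the multipliers make the `τ (n + 1)` and `τ (n - 2)` terms of `hn`, `hn1` match those of the goal
  linear_combination (norm := skip)
    τ (n - 1) x y / (τ n x y' * τ n x y * τ (n - 1) x' y * K) * hn
      - τ n x' y' / (τ (n - 1) x' y' * τ (n - 1) x' y * τ n x y' * K) * hn1
  field_simp [hτ0]
  ring

/-- If `τ_n` are nowhere vanishing solutions of the bilinear q-2DTL equation,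
then `X_n = τ_n/τ_{n-1}` solves the (scalar) noncommutative q-2DTL equation. -/
theorem stmt_18 (q α β : ℝ) (hq : 0 < q) (hq1 : q ≠ 1)
    (τ : ℤ → ℝ → ℝ → ℝ)
    (hτ0 : ∀ (n : ℤ) (x y : ℝ), τ n x y ≠ 0)
    (hbil : ∀ (n : ℤ) (x y : ℝ), x ≠ 0 → y ≠ 0 →
      rqdX q α (fun u v => rqdY q β (τ n) u v) x y * τ n x y
          - rqdX q α (τ n) x y * rqdY q β (τ n) x y
        = τ (n + 1) x (q ^ β * y) * τ (n - 1) (q ^ α * x) y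
          - τ n (q ^ α * x) (q ^ β * y) * τ n x y)
    (X : ℤ → ℝ → ℝ → ℝ)
    (hX : ∀ (n : ℤ) (x y : ℝ), X n x y = τ n x y / τ (n - 1) x y) :
    ∀ (n : ℤ) (x y : ℝ), x ≠ 0 → y ≠ 0 →
      rqdY q β (fun u v => rqdX q α (X n) u v * (X n u v)⁻¹) x y
        = X (n + 1) x (q ^ β * y) * (X n x y)⁻¹
          - X n (q ^ α * x) (q ^ β * y) * (X (n - 1) (q ^ α * x) y)⁻¹ :=
  stmt_18_general q α β hq1 τ hτ0 hbil X hX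
end

section
/- (Darboux transformation for the noncommutative KP Lax pair.) Let v, θ, φ ∈ R with θ invertible, and suppose θ and φ both satisfy the noncommutative KP Lax pair: ∂_x²(ψ) + ∂_x(v)·ψ − ∂_y(ψ) = 0 and 4∂_x³(ψ) + 6∂_x(v)·∂_x(ψ) + 3∂_x²(v)·ψ + 3∂_y(v)·ψ + ∂_t(ψ) = 0 (for ψ = θ and ψ = φ). Define φ̃ = ∂_x(φ) − ∂_x(θ)·θ⁻¹·φ and ṽ = v + 2∂_x(θ)·θ⁻¹. Then φ̃ satisfies the same Lax pair with v replaced by ṽ: ∂_x²(φ̃) + ∂_x(ṽ)·φ̃ − ∂_y(φ̃) = 0 and 4∂_x³(φ̃) + 6∂_x(ṽ)·∂_x(φ̃) + 3∂_x²(ṽ)·φ̃ + 3∂_y(ṽ)·φ̃ + ∂_t(φ̃) = 0. -/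
/-!
Put σ = θₓθ⁻¹, so that θₓ = σθ. The Lax equations for θ then read θ_y = Yθ and θ_t = Tθ, where
Y and T are polynomials in σ, v and their derivatives, and equality of the mixed partials of θ
gives, after cancelling θ, the zero-curvature equations σ_y = Yₓ + [Y, σ], σ_t = Tₓ + [T, σ].
Since φ̃ = φₓ − σφ and ṽ = v + 2σ, once φ_y, φ_t, σ_y and σ_t are eliminated both Lax equations
for φ̃ become identities between noncommutative polynomials.
-/

structure IsDerivation {R : Type*} [Ring R] (D : R → R) : Prop where
  map_add : ∀ a b, D (a + b) = D a + D b
  map_mul : ∀ a b, D (a * b) = D a * b + a * D b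

namespace IsDerivation

variable {R : Type*} [Ring R] {D : R → R}

theorem map_zero (hD : IsDerivation D) : D 0 = 0 := by
  simpa using hD.map_add 0 0

theorem map_neg (hD : IsDerivation D) (a : R) : D (-a) = -D a :=
  eq_neg_of_add_eq_zero_left <| by rw [← hD.map_add, neg_add_cancel, hD.map_zero]

theorem map_sub (hD : IsDerivation D) (a b : R) : D (a - b) = D a - D b := by
  rw [sub_eq_add_neg, hD.map_add, hD.map_neg, ← sub_eq_add_neg]

theorem map_one (hD : IsDerivation D) : D 1 = 0 := by
  simpa using hD.map_mul 1 1

theorem map_natCast (hD : IsDerivation D) (n : ℕ) : D n = 0 := by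
  induction n with
  | zero => rw [Nat.cast_zero, hD.map_zero]
  | succ n ih => rw [Nat.cast_succ, hD.map_add, ih, hD.map_one, add_zero]

theorem map_ofNat (hD : IsDerivation D) (n : ℕ) [n.AtLeastTwo] :
    D (no_index (OfNat.ofNat n : R)) = 0 := by
  rw [← Nat.cast_ofNat, hD.map_natCast]

end IsDerivation

section Lax

variable {R : Type*} [Ring R]

def laxY (Dx Dy : R → R) (v ψ : R) : R :=
  Dx (Dx ψ) + Dx v * ψ - Dy ψ

def laxT (Dx Dy Dt : R → R) (v ψ : R) : R :=
  4 * Dx (Dx (Dx ψ)) + 6 * (Dx v * Dx ψ) + 3 * (Dx (Dx v) * ψ) + 3 * (Dy v * ψ) + Dt ψ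

end Lax

section Darboux

variable {R : Type*} [Ring R] {Dx Dy Dt : R → R}

theorem map_mul_of_eq_mul (hx : ∀ a b, Dx (a * b) = Dx a * b + a * Dx b) {θ σ : R}
    (hσ : Dx θ = σ * θ) (a : R) : Dx (a * θ) = (Dx a + a * σ) * θ := by
  rw [hx, hσ, add_mul, mul_assoc]

theorem zero_curvature (hx : ∀ a b, Dx (a * b) = Dx a * b + a * Dx b)
    (hy : ∀ a b, Dy (a * b) = Dy a * b + a * Dy b) (hxy : ∀ a, Dx (Dy a) = Dy (Dx a))
    {θ σ A : R} (hθ : IsRightRegular θ) (hσ : Dx θ = σ * θ) (hA : Dy θ = A * θ) :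
    Dy σ = Dx A + A * σ - σ * A := by
  refine hθ ?_
  have h := hxy θ
  rw [hA, hσ, map_mul_of_eq_mul hx hσ, hy, hA] at h
  simp only [sub_mul, add_mul, mul_assoc] at h ⊢
  rw [h]
  abel

theorem map_eq_mul_of_laxY_eq_zero (hx : ∀ a b, Dx (a * b) = Dx a * b + a * Dx b) {v θ σ : R}
    (hσ : Dx θ = σ * θ) (hθ : laxY Dx Dy v θ = 0) :
    Dy θ = (Dx σ + σ * σ + Dx v) * θ := by
  rw [← sub_eq_zero.mp hθ, hσ, map_mul_of_eq_mul hx hσ, add_mul (Dx σ + σ * σ), add_mul]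

theorem map_eq_mul_of_laxT_eq_zero (hx : ∀ a b, Dx (a * b) = Dx a * b + a * Dx b) {v θ σ : R}
    (hσ : Dx θ = σ * θ) (hθ : laxT Dx Dy Dt v θ = 0) :
    Dt θ = -(4 * (Dx (Dx σ + σ * σ) + (Dx σ + σ * σ) * σ) + 6 * (Dx v * σ)
      + 3 * Dx (Dx v) + 3 * Dy v) * θ := by
  rw [eq_neg_of_add_eq_zero_right hθ]
  simp only [hσ, map_mul_of_eq_mul hx hσ]
  noncomm_ring

theorem laxY_darboux_of_logDeriv (dx : IsDerivation Dx) (dy : IsDerivation Dy)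
    (hxy : ∀ a, Dx (Dy a) = Dy (Dx a)) {v σ φ Y : R} (hY : Y = Dx σ + σ * σ + Dx v)
    (hσ : Dy σ = Dx Y + Y * σ - σ * Y) (hφ : laxY Dx Dy v φ = 0) :
    laxY Dx Dy (v + 2 * σ) (Dx φ - σ * φ) = 0 := by
  have hφy : Dy φ = Dx (Dx φ) + Dx v * φ := (sub_eq_zero.mp hφ).symm
  subst hY
  simp only [laxY, dx.map_add, dx.map_sub, dx.map_mul, dx.map_ofNat, dy.map_sub, dy.map_mul,
    ← hxy, hφy, hσ, zero_mul, zero_add]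
  noncomm_ring

theorem laxT_darboux_of_logDeriv (dx : IsDerivation Dx) (dy : IsDerivation Dy)
    (dt : IsDerivation Dt) (hxt : ∀ a, Dx (Dt a) = Dt (Dx a)) {v σ φ Y T : R}
    (hY : Y = Dx σ + σ * σ + Dx v) (hσy : Dy σ = Dx Y + Y * σ - σ * Y)
    (hT : T = -(4 * (Dx (Dx σ + σ * σ) + (Dx σ + σ * σ) * σ) + 6 * (Dx v * σ)
      + 3 * Dx (Dx v) + 3 * Dy v))
    (hσt : Dt σ = Dx T + T * σ - σ * T) (hφ : laxT Dx Dy Dt v φ = 0) :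
    laxT Dx Dy Dt (v + 2 * σ) (Dx φ - σ * φ) = 0 := by
  have hφt : Dt φ = -(4 * Dx (Dx (Dx φ)) + 6 * (Dx v * Dx φ) + 3 * (Dx (Dx v) * φ)
      + 3 * (Dy v * φ)) := eq_neg_of_add_eq_zero_right hφ
  subst hY hT
  simp only [laxT, dx.map_add, dx.map_sub, dx.map_neg, dx.map_mul, dx.map_ofNat,
    dy.map_add, dy.map_mul, dy.map_ofNat, dt.map_sub, dt.map_mul, ← hxt, hφt, hσy, hσt,
    zero_mul, zero_add]
  noncomm_ring

end Darboux

theorem stmt_19_general {R : Type*} [Ring R]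
    (Dx Dy Dt : R → R)
    (hDxadd : ∀ a b : R, Dx (a + b) = Dx a + Dx b)
    (hDyadd : ∀ a b : R, Dy (a + b) = Dy a + Dy b)
    (hDtadd : ∀ a b : R, Dt (a + b) = Dt a + Dt b)
    (hDxmul : ∀ a b : R, Dx (a * b) = Dx a * b + a * Dx b)
    (hDymul : ∀ a b : R, Dy (a * b) = Dy a * b + a * Dy b)
    (hDtmul : ∀ a b : R, Dt (a * b) = Dt a * b + a * Dt b)
    (hxy : ∀ a : R, Dx (Dy a) = Dy (Dx a))
    (hxt : ∀ a : R, Dx (Dt a) = Dt (Dx a))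
    (v θ φ : R) (hθ : IsUnit θ)
    (hθ1 : Dx (Dx θ) + Dx v * θ - Dy θ = 0)
    (hθ2 : 4 * Dx (Dx (Dx θ)) + 6 * (Dx v * Dx θ) + 3 * (Dx (Dx v) * θ)
      + 3 * (Dy v * θ) + Dt θ = 0)
    (hφ1 : Dx (Dx φ) + Dx v * φ - Dy φ = 0)
    (hφ2 : 4 * Dx (Dx (Dx φ)) + 6 * (Dx v * Dx φ) + 3 * (Dx (Dx v) * φ)
      + 3 * (Dy v * φ) + Dt φ = 0)
    (φt vt : R)
    (hφt : φt = Dx φ - Dx θ * Ring.inverse θ * φ)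
    (hvt : vt = v + 2 * (Dx θ * Ring.inverse θ)) :
    Dx (Dx φt) + Dx vt * φt - Dy φt = 0
      ∧ 4 * Dx (Dx (Dx φt)) + 6 * (Dx vt * Dx φt) + 3 * (Dx (Dx vt) * φt)
        + 3 * (Dy vt * φt) + Dt φt = 0 := by
  subst hφt hvt
  set σ := Dx θ * Ring.inverse θ
  have hσ : Dx θ = σ * θ := by rw [mul_assoc, Ring.inverse_mul_cancel θ hθ, mul_one]
  have hσy := zero_curvature hDxmul hDymul hxy hθ.isRegular.right hσ
    (map_eq_mul_of_laxY_eq_zero hDxmul hσ hθ1)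
  have hσt := zero_curvature hDxmul hDtmul hxt hθ.isRegular.right hσ
    (map_eq_mul_of_laxT_eq_zero hDxmul hσ hθ2)
  have dx : IsDerivation Dx := ⟨hDxadd, hDxmul⟩
  have dy : IsDerivation Dy := ⟨hDyadd, hDymul⟩
  exact ⟨laxY_darboux_of_logDeriv dx dy hxy rfl hσy hφ1,
    laxT_darboux_of_logDeriv dx dy ⟨hDtadd, hDtmul⟩ hxt rfl hσy rfl hσt hφ2⟩

/-- Darboux transformation for the noncommutative KP Lax pair: if `θ`, `φ` are
eigenfunctions then `φ̃ = ∂ₓφ - ∂ₓθ·θ⁻¹·φ` is an eigenfunction for the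
transformed potential `ṽ = v + 2∂ₓθ·θ⁻¹`. -/
theorem stmt_19 {R : Type*} [Ring R] [Algebra ℚ R]
    (Dx Dy Dt : R → R)
    (hDxadd : ∀ a b : R, Dx (a + b) = Dx a + Dx b)
    (hDyadd : ∀ a b : R, Dy (a + b) = Dy a + Dy b)
    (hDtadd : ∀ a b : R, Dt (a + b) = Dt a + Dt b)
    (hDxmul : ∀ a b : R, Dx (a * b) = Dx a * b + a * Dx b)
    (hDymul : ∀ a b : R, Dy (a * b) = Dy a * b + a * Dy b)
    (hDtmul : ∀ a b : R, Dt (a * b) = Dt a * b + a * Dt b)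
    (hxy : ∀ a : R, Dx (Dy a) = Dy (Dx a))
    (hxt : ∀ a : R, Dx (Dt a) = Dt (Dx a))
    (hyt : ∀ a : R, Dy (Dt a) = Dt (Dy a))
    (v θ φ : R) (hθ : IsUnit θ)
    (hθ1 : Dx (Dx θ) + Dx v * θ - Dy θ = 0)
    (hθ2 : 4 * Dx (Dx (Dx θ)) + 6 * (Dx v * Dx θ) + 3 * (Dx (Dx v) * θ)
      + 3 * (Dy v * θ) + Dt θ = 0)
    (hφ1 : Dx (Dx φ) + Dx v * φ - Dy φ = 0)
    (hφ2 : 4 * Dx (Dx (Dx φ)) + 6 * (Dx v * Dx φ) + 3 * (Dx (Dx v) * φ)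
      + 3 * (Dy v * φ) + Dt φ = 0)
    (φt vt : R)
    (hφt : φt = Dx φ - Dx θ * Ring.inverse θ * φ)
    (hvt : vt = v + 2 * (Dx θ * Ring.inverse θ)) :
    Dx (Dx φt) + Dx vt * φt - Dy φt = 0
      ∧ 4 * Dx (Dx (Dx φt)) + 6 * (Dx vt * Dx φt) + 3 * (Dx (Dx vt) * φt)
        + 3 * (Dy vt * φt) + Dt φt = 0 :=
  stmt_19_general Dx Dy Dt hDxadd hDyadd hDtadd hDxmul hDymul hDtmul hxy hxt v θ φ hθ hθ1 hθ2 hφ1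
    hφ2 φt vt hφt hvt
end
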